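/- arXiv:math-ph/0503009 — 6 statements merged into one kernel-verified Lean document; each statement's English description precedes it below -/
import Mathlib

section
/- For every real number y and every real r ≥ 2, one has |1+y|^r − 1 − r·y ≥ 2^(2−r)·|y|^r. -/
/-!
Put `c = 2^(2-r)` and `F y = |1+y|^r - 1 - r y - c |y|^r`, so that `F 0 = 0`. Writing
`φ t = |t|^(r-2) t` for the odd power `sign t · |t|^(r-1)`, one has
`F' y = r (φ (1+y) - 1 - c φ y)`, and this has the sign of `y`: for `y ≥ 0` by superadditivity
of `t ↦ t^(r-1)`, for `-1 ≤ y ≤ 0` by the same superadditivity applied to `1+y` and `-y`, and for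
`y ≤ -1` by the power-mean bound `(a+b)^p ≤ 2^(p-1) (a^p + b^p)` with `p = r-1`. Hence `0` is
the global minimum of `F`.
-/

open Set

lemma Real.rpow_add_le_two_rpow_mul_add_rpow {a b p : ℝ} (ha : 0 ≤ a) (hb : 0 ≤ b) (hp : 1 ≤ p) :
    (a + b) ^ p ≤ 2 ^ (p - 1) * (a ^ p + b ^ p) := by
  lift a to NNReal using ha
  lift b to NNReal using hb
  exact_mod_cast NNReal.rpow_add_le_mul_rpow_add_rpow a b hp

lemma le_of_hasDerivAt_nonpos_of_nonneg {f f' : ℝ → ℝ} {a : ℝ}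
    (hf : ∀ x, HasDerivAt f (f' x) x) (hleft : ∀ x < a, f' x ≤ 0) (hright : ∀ x, a < x → 0 ≤ f' x)
    (x : ℝ) : f a ≤ f x := by
  have hcont : Continuous f := continuous_iff_continuousAt.2 fun x => (hf x).continuousAt
  rcases le_total a x with hax | hxa
  · refine monotoneOn_of_hasDerivWithinAt_nonneg (convex_Ici a) hcont.continuousOn
      (fun y _ => (hf y).hasDerivWithinAt) (fun y hy => hright y ?_) self_mem_Ici hax hax
    rwa [interior_Ici] at hy
  · refine antitoneOn_of_hasDerivWithinAt_nonpos (convex_Iic a) hcont.continuousOn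
      (fun y _ => (hf y).hasDerivWithinAt) (fun y hy => hleft y ?_) hxa self_mem_Iic hxa
    rwa [interior_Iic] at hy

section OddPower

variable {r : ℝ}

lemma abs_rpow_sub_two_mul_self_of_nonneg (hr : 1 < r) {t : ℝ} (ht : 0 ≤ t) :
    |t| ^ (r - 2) * t = t ^ (r - 1) := by
  rw [abs_of_nonneg ht, show r - 1 = r - 2 + 1 by ring, Real.rpow_add_one' ht (by linarith)]

lemma abs_rpow_sub_two_mul_self_of_nonpos (hr : 1 < r) {t : ℝ} (ht : t ≤ 0) :
    |t| ^ (r - 2) * t = -(-t) ^ (r - 1) := by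
  rw [← abs_neg, ← abs_rpow_sub_two_mul_self_of_nonneg hr (neg_nonneg.2 ht), mul_neg, neg_neg]

lemma two_rpow_two_sub_le_one (hr : 2 ≤ r) : (2 : ℝ) ^ (2 - r) ≤ 1 :=
  Real.rpow_le_one_of_one_le_of_nonpos one_le_two (by linarith)

lemma one_add_two_rpow_mul_le_of_nonneg (hr : 2 ≤ r) {y : ℝ} (hy : 0 ≤ y) :
    1 + 2 ^ (2 - r) * (|y| ^ (r - 2) * y) ≤ |1 + y| ^ (r - 2) * (1 + y) := by
  have hr1 : 1 < r := by linarith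
  rw [abs_rpow_sub_two_mul_self_of_nonneg hr1 hy,
    abs_rpow_sub_two_mul_self_of_nonneg hr1 (by linarith)]
  have hsuper := Real.add_rpow_le_rpow_add zero_le_one hy (by linarith : 1 ≤ r - 1)
  rw [Real.one_rpow] at hsuper
  linarith [mul_le_of_le_one_left (Real.rpow_nonneg hy (r - 1)) (two_rpow_two_sub_le_one hr)]

lemma le_one_add_two_rpow_mul_of_nonpos (hr : 2 ≤ r) {y : ℝ} (hy : y ≤ 0) :
    |1 + y| ^ (r - 2) * (1 + y) ≤ 1 + 2 ^ (2 - r) * (|y| ^ (r - 2) * y) := by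
  have hr1 : 1 < r := by linarith
  have hp : 1 ≤ r - 1 := by linarith
  rw [abs_rpow_sub_two_mul_self_of_nonpos hr1 hy]
  rcases le_total 0 (1 + y) with hy1 | hy1
  · rw [abs_rpow_sub_two_mul_self_of_nonneg hr1 hy1]
    have hsuper := Real.add_rpow_le_rpow_add hy1 (neg_nonneg.2 hy) hp
    rw [add_neg_cancel_right, Real.one_rpow] at hsuper
    linarith [mul_le_of_le_one_left (Real.rpow_nonneg (neg_nonneg.2 hy) (r - 1))
      (two_rpow_two_sub_le_one hr)]
  · rw [abs_rpow_sub_two_mul_self_of_nonpos hr1 hy1]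
    have hmean := Real.rpow_add_le_two_rpow_mul_add_rpow zero_le_one (neg_nonneg.2 hy1) hp
    rw [show 1 + -(1 + y) = -y by ring, Real.one_rpow] at hmean
    have hcancel : (2 : ℝ) ^ (2 - r) * 2 ^ (r - 1 - 1) = 1 := by
      rw [← Real.rpow_add two_pos, show 2 - r + (r - 1 - 1) = 0 by ring, Real.rpow_zero]
    have hscaled := mul_le_mul_of_nonneg_left hmean (Real.rpow_nonneg zero_le_two (2 - r))
    rw [← mul_assoc, hcancel, one_mul] at hscaled
    linarith

end OddPower

lemma hasDerivAt_abs_one_add_rpow_sub {r : ℝ} (hr : 1 < r) (c y : ℝ) :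
    HasDerivAt (fun y => |1 + y| ^ r - 1 - r * y - c * |y| ^ r)
      (r * (|1 + y| ^ (r - 2) * (1 + y) - 1 - c * (|y| ^ (r - 2) * y))) y := by
  have hshift := (hasDerivAt_abs_rpow (1 + y) hr).comp_const_add 1 y
  have hlin : HasDerivAt (fun y : ℝ => r * y) r y := by
    simpa using (hasDerivAt_id y).const_mul r
  exact (((hshift.sub_const 1).sub hlin).sub ((hasDerivAt_abs_rpow y hr).const_mul c)).congr_deriv
    (by ring)

/-- Lemma B.4 (lem:c3): for every real `y` and every real `r ≥ 2`,
`|1+y|^r − 1 − r·y ≥ 2^(2−r)·|y|^r`. -/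
theorem stmt_1 (y r : ℝ) (hr : 2 ≤ r) :
    (2 : ℝ) ^ (2 - r) * |y| ^ r ≤ |1 + y| ^ r - 1 - r * y := by
  have hr0 : 0 < r := by linarith
  have hmin := le_of_hasDerivAt_nonpos_of_nonneg
    (hasDerivAt_abs_one_add_rpow_sub (by linarith) (2 ^ (2 - r)))
    (fun x hx => mul_nonpos_of_nonneg_of_nonpos hr0.le
      (by linarith [le_one_add_two_rpow_mul_of_nonpos hr hx.le]))
    (fun x hx => mul_nonneg hr0.le
      (by linarith [one_add_two_rpow_mul_le_of_nonneg hr hx.le])) y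
  simp only [add_zero, abs_one, Real.one_rpow, mul_zero, abs_zero,
    Real.zero_rpow hr0.ne', sub_self] at hmin
  linarith
end

section
/- Let d ≥ 1, let ε > 0, 1 ≤ r ≤ 2, ρ₁ > 0 and C_a > 0 be real numbers, and let V : ℝ^d → ℝ be twice continuously differentiable such that for all x, ξ ∈ ℝ^d one has ξ · (Hess V(x)) ξ ≥ ρ₁ ε² (1+ε²|x|²)^((r−2)/2) |ξ|². Then for every a ∈ ℝ^d with ε|a| ≤ C_a and every x ∈ ℝ^d, V(x+a) − V(a) − ∇V(a)·x ≥ C₀ ρ₁ ε² |x|² (1+ε²|x|²)^((r−2)/2), where C₀ := 1 / (2·(2(1+C_a²))^((2−r)/2)). -/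
/-!
Along the segment `t ↦ a + t • x`, `t ∈ [0,1]`, the points satisfy `‖a + t • x‖ ≤ ‖a‖ + ‖x‖`,
so Peetre's inequality `1 + (p + q)² ≤ 2 (1 + p²)(1 + q²)` and `ε‖a‖ ≤ C_a` give
`⟨ε(a + t x)⟩² ≤ 2(1 + C_a²) ⟨εx⟩²`. Since `(r - 2)/2 ≤ 0`, the Hessian bound in direction `x`
is therefore at least `ρ₁ ε² (2(1 + C_a²))^((r-2)/2) ⟨εx⟩^(r-2) ‖x‖²` on the whole segment, and
Taylor's formula turns a lower bound `M` on the second derivative into the lower bound `M / 2`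
on the remainder.
-/

open Set

lemma monotoneOn_Icc_of_hasDerivAt_nonneg {f f' : ℝ → ℝ} {a b : ℝ}
    (hf : ∀ t, HasDerivAt f (f' t) t) (hf' : ∀ t ∈ Icc a b, 0 ≤ f' t) :
    MonotoneOn f (Icc a b) :=
  monotoneOn_of_hasDerivWithinAt_nonneg (convex_Icc a b)
    (fun t _ => (hf t).continuousAt.continuousWithinAt) (fun t _ => (hf t).hasDerivWithinAt)
    (fun t ht => hf' t (interior_subset ht))

lemma half_le_taylor_remainder_of_le_deriv2 {g g' g'' : ℝ → ℝ} {M : ℝ}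
    (hg : ∀ t, HasDerivAt g (g' t) t) (hg' : ∀ t, HasDerivAt g' (g'' t) t)
    (hM : ∀ t ∈ Icc (0 : ℝ) 1, M ≤ g'' t) :
    M / 2 ≤ g 1 - g 0 - g' 0 := by
  have hslope : ∀ t ∈ Icc (0 : ℝ) 1, 0 ≤ g' t - g' 0 - M * t := by
    have hmono : MonotoneOn (fun t => g' t - M * t) (Icc 0 1) :=
      monotoneOn_Icc_of_hasDerivAt_nonneg
        (fun t => ((hg' t).sub ((hasDerivAt_id t).const_mul M)).congr_deriv (by simp))
        (fun t ht => sub_nonneg.2 (hM t ht))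
    intro t ht
    have := hmono (left_mem_Icc.2 zero_le_one) ht ht.1
    simp only [mul_zero, sub_zero] at this
    linarith
  have hmono : MonotoneOn (fun t => g t - g' 0 * t - M * t ^ 2 / 2) (Icc 0 1) := by
    refine monotoneOn_Icc_of_hasDerivAt_nonneg (fun t => ?_) hslope
    have := ((hg t).sub ((hasDerivAt_id t).const_mul (g' 0))).sub
      (((hasDerivAt_pow 2 t).const_mul M).div_const 2)
    exact this.congr_deriv (by ring)
  have := hmono (left_mem_Icc.2 zero_le_one) (right_mem_Icc.2 zero_le_one) zero_le_one
  norm_num at this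
  linarith

lemma half_le_taylor_remainder_of_le_hessian {E : Type*} [NormedAddCommGroup E]
    [NormedSpace ℝ E] {V : E → ℝ} (hV : ContDiff ℝ 2 V) (a x : E) {M : ℝ}
    (hM : ∀ t ∈ Icc (0 : ℝ) 1, M ≤ iteratedFDeriv ℝ 2 V (a + t • x) ![x, x]) :
    M / 2 ≤ V (a + x) - V a - fderiv ℝ V a x := by
  have hline : ∀ t : ℝ, HasDerivAt (fun s : ℝ => a + s • x) x t := fun t =>
    (((hasDerivAt_id t).smul_const x).const_add a).congr_deriv (by simp)
  have hV' : Differentiable ℝ (fderiv ℝ V) :=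
    (hV.fderiv_right (m := 1) le_rfl).differentiable one_ne_zero
  have hV'' : ∀ t : ℝ, HasDerivAt (fun s : ℝ => fderiv ℝ V (a + s • x) x)
      (iteratedFDeriv ℝ 2 V (a + t • x) ![x, x]) t := by
    intro t
    rw [iteratedFDeriv_two_apply]
    exact ((ContinuousLinearMap.apply ℝ ℝ x).hasFDerivAt.comp _
      (hV' _).hasFDerivAt).comp_hasDerivAt t (hline t)
  have := half_le_taylor_remainder_of_le_deriv2
    (fun t => ((hV.differentiable (by norm_num) _).hasFDerivAt).comp_hasDerivAt t (hline t))
    hV'' hM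
  simpa using this

lemma norm_add_smul_le_of_mem_Icc {E : Type*} [SeminormedAddCommGroup E] [NormedSpace ℝ E]
    (a x : E) {t : ℝ} (ht : t ∈ Icc (0 : ℝ) 1) : ‖a + t • x‖ ≤ ‖a‖ + ‖x‖ :=
  calc ‖a + t • x‖ ≤ ‖a‖ + |t| * ‖x‖ := by grw [norm_add_le, norm_smul, Real.norm_eq_abs]
    _ ≤ ‖a‖ + ‖x‖ := by
      gcongr
      exact mul_le_of_le_one_left (norm_nonneg x) (abs_le.2 ⟨by linarith [ht.1], ht.2⟩)

lemma one_add_sq_add_le (p q : ℝ) : 1 + (p + q) ^ 2 ≤ 2 * (1 + p ^ 2) * (1 + q ^ 2) := by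
  nlinarith [sq_nonneg (p - q), sq_nonneg (p * q)]

lemma one_add_sq_mul_sq_norm_add_smul_le {E : Type*} [SeminormedAddCommGroup E]
    [NormedSpace ℝ E] {ε C : ℝ} (hε : 0 ≤ ε) {a : E} (ha : ε * ‖a‖ ≤ C) (x : E) {t : ℝ}
    (ht : t ∈ Icc (0 : ℝ) 1) :
    1 + ε ^ 2 * ‖a + t • x‖ ^ 2 ≤ 2 * (1 + C ^ 2) * (1 + ε ^ 2 * ‖x‖ ^ 2) :=
  calc 1 + ε ^ 2 * ‖a + t • x‖ ^ 2 = 1 + (ε * ‖a + t • x‖) ^ 2 := by ring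
    _ ≤ 1 + (ε * ‖a‖ + ε * ‖x‖) ^ 2 := by
      rw [← mul_add]
      gcongr
      exact norm_add_smul_le_of_mem_Icc a x ht
    _ ≤ 2 * (1 + (ε * ‖a‖) ^ 2) * (1 + (ε * ‖x‖) ^ 2) := one_add_sq_add_le _ _
    _ ≤ 2 * (1 + C ^ 2) * (1 + ε ^ 2 * ‖x‖ ^ 2) := by
      rw [mul_pow ε ‖x‖]
      gcongr

theorem stmt_4_general (d : ℕ) (ε r ρ₁ C_a : ℝ) (hε : 0 < ε)
    (hr2 : r ≤ 2) (hρ : 0 < ρ₁)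
    (V : EuclideanSpace ℝ (Fin d) → ℝ) (hV : ContDiff ℝ 2 V)
    (hHess : ∀ x ξ : EuclideanSpace ℝ (Fin d),
      ρ₁ * ε ^ 2 * (1 + ε ^ 2 * ‖x‖ ^ 2) ^ ((r - 2) / 2) * ‖ξ‖ ^ 2 ≤
        iteratedFDeriv ℝ 2 V x ![ξ, ξ]) :
    ∀ a : EuclideanSpace ℝ (Fin d), ε * ‖a‖ ≤ C_a →
    ∀ x : EuclideanSpace ℝ (Fin d),
      (1 / (2 * (2 * (1 + C_a ^ 2)) ^ ((2 - r) / 2))) * ρ₁ * ε ^ 2 * ‖x‖ ^ 2 *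
          (1 + ε ^ 2 * ‖x‖ ^ 2) ^ ((r - 2) / 2) ≤
        V (x + a) - V a - fderiv ℝ V a x := by
  intro a ha x
  set B : ℝ := 2 * (1 + C_a ^ 2)
  have hB : 0 < B := by positivity
  have hsegment : ∀ t ∈ Icc (0 : ℝ) 1,
      ρ₁ * ε ^ 2 * (B ^ ((r - 2) / 2) * (1 + ε ^ 2 * ‖x‖ ^ 2) ^ ((r - 2) / 2)) * ‖x‖ ^ 2 ≤
        iteratedFDeriv ℝ 2 V (a + t • x) ![x, x] := by
    intro t ht
    refine le_trans ?_ (hHess _ x)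
    rw [← Real.mul_rpow hB.le (by positivity)]
    gcongr ρ₁ * ε ^ 2 * ?_ * ‖x‖ ^ 2
    exact Real.rpow_le_rpow_of_nonpos (by positivity)
      (one_add_sq_mul_sq_norm_add_smul_le hε.le ha x ht) (by linarith)
  have hB_pow : B ^ ((r - 2) / 2) = (B ^ ((2 - r) / 2))⁻¹ := by
    rw [← Real.rpow_neg hB.le]
    ring_nf
  rw [add_comm x a]
  convert half_le_taylor_remainder_of_le_hessian hV a x hsegment using 1
  rw [hB_pow]
  field_simp

/-- Case (ii) of Lemma A.1 (lem:RVbd): for `1 ≤ r ≤ 2`, a `C²` potential `V` on `ℝ^d`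
with `ξ·(Hess V(x))ξ ≥ ρ₁ ε² (1+ε²|x|²)^((r−2)/2) |ξ|²`, and `a` with `ε|a| ≤ C_a`,
the Taylor remainder `R_V(x) = V(x+a) − V(a) − ∇V(a)·x` satisfies
`R_V(x) ≥ C₀ ρ₁ ε² |x|² (1+ε²|x|²)^((r−2)/2)` with `C₀ = 1/(2(2(1+C_a²))^((2−r)/2))`. -/
theorem stmt_4 (d : ℕ) (hd : 1 ≤ d) (ε r ρ₁ C_a : ℝ) (hε : 0 < ε)
    (hr1 : 1 ≤ r) (hr2 : r ≤ 2) (hρ : 0 < ρ₁) (hCa : 0 < C_a)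
    (V : EuclideanSpace ℝ (Fin d) → ℝ) (hV : ContDiff ℝ 2 V)
    (hHess : ∀ x ξ : EuclideanSpace ℝ (Fin d),
      ρ₁ * ε ^ 2 * (1 + ε ^ 2 * ‖x‖ ^ 2) ^ ((r - 2) / 2) * ‖ξ‖ ^ 2 ≤
        iteratedFDeriv ℝ 2 V x ![ξ, ξ]) :
    ∀ a : EuclideanSpace ℝ (Fin d), ε * ‖a‖ ≤ C_a →
    ∀ x : EuclideanSpace ℝ (Fin d),
      (1 / (2 * (2 * (1 + C_a ^ 2)) ^ ((2 - r) / 2))) * ρ₁ * ε ^ 2 * ‖x‖ ^ 2 *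
          (1 + ε ^ 2 * ‖x‖ ^ 2) ^ ((r - 2) / 2) ≤
        V (x + a) - V a - fderiv ℝ V a x :=
  stmt_4_general d ε r ρ₁ C_a hε hr2 hρ V hV hHess
end

section
/- Let d ≥ 1, ε > 0, r ≥ 2, C_V > 0 and C_a > 0 be real numbers, and let V : ℝ^d → ℝ be three times continuously differentiable such that |∂_j∂_k∂_l V(x)| ≤ C_V ε³ (1+ε²|x|²)^((r−3)/2) for all x ∈ ℝ^d and all indices j,k,l ∈ {1,…,d}. Then for every a ∈ ℝ^d with ε|a| ≤ C_a, every x ∈ ℝ^d and every index j, one has |∂_j V(x+a) − ∂_j V(a) − Σ_k ∂_k∂_j V(a)·x_k| ≤ C₁ ε³ |x|² (1+ε²|x|²)^(max(r−3,0)/2), where C₁ := (1/2)·C_V·d·(2(1+C_a²))^(max(r−3,0)/2). -/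
/-!
Fix `j` and put `g := ∂_j V`. The quantity to bound is the first-order Taylor remainder
`g (a + x) - g a - Dg(a) x`, which is at most half the supremum of `|D²g(a + t x)(x, x)|`
over `t ∈ [0, 1]`. Expanding `x` in the standard basis,
`|D²g(z)(x, x)| ≤ (∑ |x_k|)² max |∂_k∂_l∂_j V(z)| ≤ d |x|² max |∂_k∂_l∂_j V(z)|`.
On the segment, Peetre's inequality and `ε|a| ≤ C_a` give
`⟨ε z⟩² ≤ 2 (1 + C_a²) ⟨ε x⟩²`, so the weight `⟨ε z⟩^(r-3)` is controlled by `⟨ε x⟩^max(r-3,0)`.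
-/

open Set

theorem one_add_sq_le_two_mul_of_le_add {p q s : ℝ} (hs : 0 ≤ s) (h : s ≤ p + q) :
    1 + s ^ 2 ≤ 2 * (1 + p ^ 2) * (1 + q ^ 2) := by
  nlinarith [sq_nonneg (p - q), mul_nonneg (sq_nonneg p) (sq_nonneg q)]

theorem one_add_sq_norm_add_smul_le {E : Type*} [NormedAddCommGroup E] [NormedSpace ℝ E]
    {ε C : ℝ} (hε : 0 ≤ ε) {a : E} (ha : ε * ‖a‖ ≤ C) (x : E) {t : ℝ} (ht : t ∈ Icc (0 : ℝ) 1) :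
    1 + ε ^ 2 * ‖a + t • x‖ ^ 2 ≤ 2 * (1 + C ^ 2) * (1 + ε ^ 2 * ‖x‖ ^ 2) := by
  have hz : ‖a + t • x‖ ≤ ‖a‖ + ‖x‖ := by
    calc ‖a + t • x‖ ≤ ‖a‖ + |t| * ‖x‖ := by
          rw [← Real.norm_eq_abs, ← norm_smul]; exact norm_add_le _ _
      _ ≤ ‖a‖ + ‖x‖ := by
          gcongr
          exact mul_le_of_le_one_left (norm_nonneg x) (abs_le.2 ⟨by linarith [ht.1], ht.2⟩)
  have hpeetre := one_add_sq_le_two_mul_of_le_add (p := ε * ‖a‖) (q := ε * ‖x‖)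
    (s := ε * ‖a + t • x‖) (by positivity) (by rw [← mul_add]; gcongr)
  have hC : (ε * ‖a‖) ^ 2 ≤ C ^ 2 := pow_le_pow_left₀ (by positivity) ha 2
  nlinarith [sq_nonneg (ε * ‖x‖)]

theorem rpow_le_mul_rpow_max_zero {A B c s : ℝ} (hA : 1 ≤ A) (hc : 0 ≤ c) (hB : 0 ≤ B)
    (hAB : A ≤ c * B) : A ^ s ≤ c ^ max s 0 * B ^ max s 0 := by
  calc A ^ s ≤ A ^ max s 0 := Real.rpow_le_rpow_of_exponent_le hA (le_max_left s 0)
    _ ≤ (c * B) ^ max s 0 := Real.rpow_le_rpow (by linarith) hAB (le_max_right s 0)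
    _ = c ^ max s 0 * B ^ max s 0 := Real.mul_rpow hc hB

theorem sq_sum_abs_le_card_mul_norm_sq {ι : Type*} [Fintype ι] (x : EuclideanSpace ℝ ι) :
    (∑ k, |x k|) ^ 2 ≤ Fintype.card ι * ‖x‖ ^ 2 := by
  simpa [EuclideanSpace.norm_sq_eq] using
    sq_sum_le_card_mul_sum_sq (s := Finset.univ) (f := fun k => |x k|)

theorem norm_apply_const_le_of_norm_apply_single_le {ι F : Type*} [Fintype ι] [DecidableEq ι]
    [NormedAddCommGroup F] [NormedSpace ℝ F] {n : ℕ}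
    (f : ContinuousMultilinearMap ℝ (fun _ : Fin n => EuclideanSpace ℝ ι) F) {C : ℝ}
    (hC : ∀ k : Fin n → ι, ‖f fun i => EuclideanSpace.single (k i) 1‖ ≤ C)
    (x : EuclideanSpace ℝ ι) :
    ‖f fun _ => x‖ ≤ C * (∑ k, |x k|) ^ n := by
  have hx : x = ∑ k, x k • EuclideanSpace.single k (1 : ℝ) := by
    simpa using ((EuclideanSpace.basisFun ι ℝ).sum_repr x).symm
  calc ‖f fun _ => x‖
      = ‖∑ r : Fin n → ι, (∏ i, x (r i)) • f fun i => EuclideanSpace.single (r i) 1‖ := by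
        conv_lhs => rw [hx]
        simp only [f.map_sum, f.map_smul_univ]
    _ ≤ ∑ r : Fin n → ι, (∏ i, |x (r i)|) * C := by
        refine norm_sum_le_of_le _ fun r _ => ?_
        rw [norm_smul, Real.norm_eq_abs, Finset.abs_prod]
        gcongr
        exact hC r
    _ = C * (∑ k, |x k|) ^ n := by
        rw [← Fin.prod_const, Finset.prod_univ_sum, Finset.mul_sum]
        exact Finset.sum_congr rfl fun r _ => mul_comm _ _

theorem iteratedFDeriv_fderiv_apply_const {𝕜 E F : Type*} [NontriviallyNormedField 𝕜]
    [NormedAddCommGroup E] [NormedSpace 𝕜 E] [NormedAddCommGroup F] [NormedSpace 𝕜 F]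
    {V : E → F} {n : ℕ} (hV : ContDiff 𝕜 (n + 1) V) (u z : E) (m : Fin n → E) :
    iteratedFDeriv 𝕜 n (fun y => fderiv 𝕜 V y u) z m =
      iteratedFDeriv 𝕜 (n + 1) V z (Fin.snoc m u) := by
  rw [iteratedFDeriv_clm_apply_const_apply (hV.fderiv_right le_rfl) le_rfl,
    iteratedFDeriv_succ_apply_right, Fin.init_snoc, Fin.snoc_last]

section Taylor

variable {E F : Type*} [NormedAddCommGroup E] [NormedSpace ℝ E]
  [NormedAddCommGroup F] [NormedSpace ℝ F]

theorem norm_sub_sub_deriv_le_of_norm_deriv2_le {f f' f'' : ℝ → F} {M : ℝ}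
    (hf : ∀ t, HasDerivAt f (f' t) t) (hf' : ∀ t, HasDerivAt f' (f'' t) t)
    (hM : ∀ t ∈ Icc (0 : ℝ) 1, ‖f'' t‖ ≤ M) :
    ‖f 1 - f 0 - f' 0‖ ≤ M / 2 := by
  have hf'_lip : ∀ t ∈ Icc (0 : ℝ) 1, ‖f' t - f' 0‖ ≤ M * t := by
    intro t ht
    simpa using norm_image_sub_le_of_norm_deriv_le_segment' (fun s _ => (hf' s).hasDerivWithinAt)
      (fun s hs => hM s (Ico_subset_Icc_self hs)) t ht
  -- compare the remainder `g` with `t ↦ M t² / 2`, which vanishes at `0` and has derivative `M t`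
  let g : ℝ → F := fun t => f t - f 0 - t • f' 0
  have hg : ∀ t, HasDerivAt g (f' t - f' 0) t := fun t =>
    (((hf t).sub_const (f 0)).sub ((hasDerivAt_id t).smul_const (f' 0))).congr_deriv (by simp)
  have hB : ∀ t, HasDerivAt (fun s => M * s ^ 2 / 2) (M * t) t := fun t =>
    (((hasDerivAt_pow 2 t).const_mul M).div_const 2).congr_deriv (by ring)
  have := image_norm_le_of_norm_deriv_right_le_deriv_boundary
    (fun t _ => (hg t).continuousAt.continuousWithinAt) (fun t _ => (hg t).hasDerivWithinAt)
    (by simp [g]) hB (fun t ht => hf'_lip t (Ico_subset_Icc_self ht)) (right_mem_Icc.2 zero_le_one)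
  simpa [g] using this

theorem norm_sub_sub_fderiv_le_of_norm_iteratedFDeriv_le {g : E → F} (hg : ContDiff ℝ 2 g)
    (a x : E) {M : ℝ}
    (hM : ∀ t ∈ Icc (0 : ℝ) 1, ‖iteratedFDeriv ℝ 2 g (a + t • x) ![x, x]‖ ≤ M) :
    ‖g (a + x) - g a - fderiv ℝ g a x‖ ≤ M / 2 := by
  have hline : ∀ t : ℝ, HasDerivAt (fun s : ℝ => a + s • x) x t := fun t => by
    simpa using ((hasDerivAt_id t).smul_const x).const_add a
  have hg1 : Differentiable ℝ g := hg.differentiable (by norm_num)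
  have hg2 : Differentiable ℝ (fderiv ℝ g) :=
    (hg.fderiv_right (m := 1) le_rfl).differentiable (by norm_num)
  have := norm_sub_sub_deriv_le_of_norm_deriv2_le (f := fun t => g (a + t • x))
    (f' := fun t => fderiv ℝ g (a + t • x) x)
    (f'' := fun t => fderiv ℝ (fderiv ℝ g) (a + t • x) x x)
    (fun t => (hg1 _).hasFDerivAt.comp_hasDerivAt t (hline t))
    (fun t => by
      simpa using
        ((hg2 _).hasFDerivAt.comp_hasDerivAt t (hline t)).clm_apply (hasDerivAt_const t x))
    (fun t ht => by simpa [iteratedFDeriv_two_apply] using hM t ht)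
  simpa using this

end Taylor

theorem stmt_5_general (d : ℕ) (ε r C_V C_a : ℝ) (hε : 0 < ε) (hCV : 0 < C_V)
    (V : EuclideanSpace ℝ (Fin d) → ℝ) (hV : ContDiff ℝ 3 V)
    (hD3 : ∀ x : EuclideanSpace ℝ (Fin d), ∀ j k l : Fin d,
      |iteratedFDeriv ℝ 3 V x
          ![EuclideanSpace.single j 1, EuclideanSpace.single k 1, EuclideanSpace.single l 1]| ≤
        C_V * ε ^ 3 * (1 + ε ^ 2 * ‖x‖ ^ 2) ^ ((r - 3) / 2)) :
    ∀ a : EuclideanSpace ℝ (Fin d), ε * ‖a‖ ≤ C_a →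
    ∀ x : EuclideanSpace ℝ (Fin d), ∀ j : Fin d,
      |fderiv ℝ V (x + a) (EuclideanSpace.single j 1) -
          fderiv ℝ V a (EuclideanSpace.single j 1) -
          iteratedFDeriv ℝ 2 V a ![x, EuclideanSpace.single j 1]| ≤
        (1 / 2 * C_V * (d : ℝ) * (2 * (1 + C_a ^ 2)) ^ (max (r - 3) 0 / 2)) * ε ^ 3 * ‖x‖ ^ 2 *
          (1 + ε ^ 2 * ‖x‖ ^ 2) ^ (max (r - 3) 0 / 2) := by
  intro a ha x j
  set e : Fin d → EuclideanSpace ℝ (Fin d) := fun k => EuclideanSpace.single k 1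
  have hs : max (r - 3) 0 / 2 = max ((r - 3) / 2) 0 := by
    rw [← max_div_div_right zero_le_two, zero_div]
  rw [hs]
  set s := max ((r - 3) / 2) 0
  set K := (2 * (1 + C_a ^ 2)) ^ s * (1 + ε ^ 2 * ‖x‖ ^ 2) ^ s
  set g := fun y => fderiv ℝ V y (e j)
  have hg : ContDiff ℝ 2 g := (hV.fderiv_right (m := 2) le_rfl).clm_apply contDiff_const
  have hM : ∀ t ∈ Icc (0 : ℝ) 1,
      ‖iteratedFDeriv ℝ 2 g (a + t • x) ![x, x]‖ ≤ C_V * ε ^ 3 * K * (d * ‖x‖ ^ 2) := by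
    intro t ht
    have hweight : (1 + ε ^ 2 * ‖a + t • x‖ ^ 2) ^ ((r - 3) / 2) ≤ K :=
      rpow_le_mul_rpow_max_zero (le_add_of_nonneg_right (by positivity)) (by positivity)
        (by positivity) (one_add_sq_norm_add_smul_le hε.le ha x ht)
    have hC : ∀ k : Fin 2 → Fin d,
        ‖iteratedFDeriv ℝ 2 g (a + t • x) fun i => e (k i)‖ ≤ C_V * ε ^ 3 * K := fun k => by
      have hsnoc : Fin.snoc (fun i => e (k i)) (e j) = ![e (k 0), e (k 1), e j] := by
        funext i; fin_cases i <;> rfl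
      rw [iteratedFDeriv_fderiv_apply_const hV, hsnoc, Real.norm_eq_abs]
      exact (hD3 _ _ _ _).trans (by gcongr)
    rw [show ![x, x] = fun _ => x by funext i; fin_cases i <;> rfl]
    calc _ ≤ C_V * ε ^ 3 * K * (∑ k, |x k|) ^ 2 :=
          norm_apply_const_le_of_norm_apply_single_le _ hC x
      _ ≤ C_V * ε ^ 3 * K * (d * ‖x‖ ^ 2) := by
          gcongr
          simpa using sq_sum_abs_le_card_mul_norm_sq x
  have hDg : fderiv ℝ g a x = iteratedFDeriv ℝ 2 V a ![x, e j] := by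
    simpa using iteratedFDeriv_fderiv_apply_const (n := 1) (hV.of_le (by norm_num)) (e j) a ![x]
  calc _ = ‖g (a + x) - g a - fderiv ℝ g a x‖ := by rw [hDg, add_comm a x, Real.norm_eq_abs]
    _ ≤ C_V * ε ^ 3 * K * (d * ‖x‖ ^ 2) / 2 :=
        norm_sub_sub_fderiv_le_of_norm_iteratedFDeriv_le hg a x hM
    _ = _ := by ring

/-- Case (i) of Lemma B.1 (lem:RVup): for `r ≥ 2` and a `C³` potential `V` on `ℝ^d`
whose third partial derivatives satisfy `|∂_j∂_k∂_l V(x)| ≤ C_V ε³ (1+ε²|x|²)^((r−3)/2)`,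
and `a` with `ε|a| ≤ C_a`, one has
`|∂_j V(x+a) − ∂_j V(a) − Σ_k ∂_k∂_j V(a) x_k| ≤ C₁ ε³ |x|² (1+ε²|x|²)^(max(r−3,0)/2)`
with `C₁ = (1/2) C_V d (2(1+C_a²))^(max(r−3,0)/2)`. -/
theorem stmt_5 (d : ℕ) (hd : 1 ≤ d) (ε r C_V C_a : ℝ) (hε : 0 < ε) (hr : 2 ≤ r)
    (hCV : 0 < C_V) (hCa : 0 < C_a)
    (V : EuclideanSpace ℝ (Fin d) → ℝ) (hV : ContDiff ℝ 3 V)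
    (hD3 : ∀ x : EuclideanSpace ℝ (Fin d), ∀ j k l : Fin d,
      |iteratedFDeriv ℝ 3 V x
          ![EuclideanSpace.single j 1, EuclideanSpace.single k 1, EuclideanSpace.single l 1]| ≤
        C_V * ε ^ 3 * (1 + ε ^ 2 * ‖x‖ ^ 2) ^ ((r - 3) / 2)) :
    ∀ a : EuclideanSpace ℝ (Fin d), ε * ‖a‖ ≤ C_a →
    ∀ x : EuclideanSpace ℝ (Fin d), ∀ j : Fin d,
      |fderiv ℝ V (x + a) (EuclideanSpace.single j 1) -
          fderiv ℝ V a (EuclideanSpace.single j 1) -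
          iteratedFDeriv ℝ 2 V a ![x, EuclideanSpace.single j 1]| ≤
        (1 / 2 * C_V * (d : ℝ) * (2 * (1 + C_a ^ 2)) ^ (max (r - 3) 0 / 2)) * ε ^ 3 * ‖x‖ ^ 2 *
          (1 + ε ^ 2 * ‖x‖ ^ 2) ^ (max (r - 3) 0 / 2) :=
  stmt_5_general d ε r C_V C_a hε hCV V hV hD3
end

section
/- Let d ≥ 1 and let C_V > 0, C_a > 0 be real numbers. There exists a constant C₂ > 0, depending only on C_V, d and C_a, such that for every 1 ≤ r < 2, every ε > 0, every three times continuously differentiable V : ℝ^d → ℝ satisfying |∂_j∂_k∂_l V(x)| ≤ C_V ε³ (1+ε²|x|²)^((r−3)/2) for all x ∈ ℝ^d and all j,k,l, every a ∈ ℝ^d with ε|a| ≤ C_a, every x ∈ ℝ^d and every index j, one has |∂_j V(x+a) − ∂_j V(a) − Σ_k ∂_k∂_j V(a)·x_k| ≤ C₂ ε³ |x|² (1+ε²|x|²)^((r−2)/2). -/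
/-!
Put `g t = ∂_j V(a + t x)`, so that the quantity to estimate is `g 1 - g 0 - g' 0`, with
`g'' t = D³V(a + t x)[x, x, e_j]`. Expanding in coordinates,
`|g'' t| ≤ d³ C_V ε³ |x|² ⟨ε(a + t x)⟩^(r-3)`. Peetre's inequality
`⟨εtx⟩² ≤ 2 ⟨εa⟩² ⟨ε(a + t x)⟩²` with `ε|a| ≤ C_a` moves the weight to `⟨εtx⟩^(r-3)`, and since
`r ≥ 1` this is at most `2 ⟨εx⟩^(r-1) / (1 + ε|x| t)²`. This bound on `g''` integrates twice over
`[0, 1]` (by the fencing form of the mean value inequality) to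
`⟨εx⟩^(r-1) / (1 + ε|x|) ≤ ⟨εx⟩^(r-2)`: the decay in `t` of the weight gains the extra power.
-/

open Real Set

lemma one_add_sq_le_of_le_add {n p q : ℝ} (hn : 0 ≤ n) (h : n ≤ p + q) :
    1 + n ^ 2 ≤ 2 * (1 + q ^ 2) * (1 + p ^ 2) := by
  nlinarith [sq_nonneg (p - q), mul_nonneg (sq_nonneg p) (sq_nonneg q), pow_le_pow_left₀ hn h 2]

lemma rpow_le_mul_rpow_of_le_mul {r A B c : ℝ} (hr₁ : 1 ≤ r) (hr₃ : r ≤ 3) (hA : 0 < A)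
    (hc : 1 ≤ c) (h : A ≤ c * B) : B ^ ((r - 3) / 2) ≤ c * A ^ ((r - 3) / 2) := by
  have hc₀ : 0 < c := one_pos.trans_le hc
  have hAB : A / c ≤ B := (div_le_iff₀' hc₀).2 h
  calc B ^ ((r - 3) / 2) ≤ (A / c) ^ ((r - 3) / 2) :=
        rpow_le_rpow_of_nonpos (by positivity) hAB (by linarith)
    _ = c ^ ((3 - r) / 2) * A ^ ((r - 3) / 2) := by
        rw [div_rpow hA.le hc₀.le, div_eq_mul_inv, ← rpow_neg hc₀.le, mul_comm]
        ring_nf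
    _ ≤ c * A ^ ((r - 3) / 2) := by
        gcongr
        exact rpow_le_self_of_one_le hc (by linarith)

lemma rpow_le_rpow_div_of_le {r A B : ℝ} (hr : 1 ≤ r) (hA : 0 < A) (h : A ≤ B) :
    A ^ ((r - 3) / 2) ≤ B ^ ((r - 1) / 2) / A := by
  rw [show (r - 3) / 2 = (r - 1) / 2 - 1 by ring, rpow_sub_one hA.ne']
  gcongr

lemma inv_one_add_sq_le {u : ℝ} (hu : 0 ≤ u) : (1 + u ^ 2)⁻¹ ≤ 2 / (1 + u) ^ 2 := by
  rw [inv_eq_one_div, div_le_div_iff₀ (by positivity) (by positivity)]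
  nlinarith [sq_nonneg (u - 1)]

lemma one_add_sq_mul_norm_add_smul_rpow_le {E : Type*} [SeminormedAddCommGroup E]
    [NormedSpace ℝ E] {r ε C s : ℝ} {a x : E} (hr₁ : 1 ≤ r) (hr₃ : r ≤ 3) (hε : 0 ≤ ε)
    (ha : ε * ‖a‖ ≤ C) (hs : s ∈ Icc (0 : ℝ) 1) :
    (1 + ε ^ 2 * ‖a + s • x‖ ^ 2) ^ ((r - 3) / 2) ≤
      4 * (1 + C ^ 2) * (1 + ε ^ 2 * ‖x‖ ^ 2) ^ ((r - 1) / 2) / (1 + ε * ‖x‖ * s) ^ 2 := by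
  obtain ⟨hs₀, hs₁⟩ := hs
  set u := ε * ‖x‖ * s
  have hu : 0 ≤ u := by positivity
  have htri : u ≤ ε * ‖a + s • x‖ + ε * ‖a‖ := by
    have : ‖s • x‖ ≤ ‖a + s • x‖ + ‖a‖ := by
      simpa using norm_sub_le (a + s • x) a
    rw [norm_smul, Real.norm_of_nonneg hs₀] at this
    nlinarith
  have hC : (ε * ‖a‖) ^ 2 ≤ C ^ 2 := pow_le_pow_left₀ (by positivity) ha 2
  have hpeetre : 1 + u ^ 2 ≤ 2 * (1 + C ^ 2) * (1 + ε ^ 2 * ‖a + s • x‖ ^ 2) := by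
    have := one_add_sq_le_of_le_add hu htri
    rw [mul_pow ε ‖a + s • x‖] at this
    refine this.trans ?_
    gcongr
  have hux : 1 + u ^ 2 ≤ 1 + ε ^ 2 * ‖x‖ ^ 2 := by
    have : u ^ 2 ≤ (ε * ‖x‖) ^ 2 :=
      pow_le_pow_left₀ hu (by nlinarith [mul_nonneg hε (norm_nonneg x)]) 2
    nlinarith
  calc (1 + ε ^ 2 * ‖a + s • x‖ ^ 2) ^ ((r - 3) / 2)
      ≤ 2 * (1 + C ^ 2) * (1 + u ^ 2) ^ ((r - 3) / 2) :=
        rpow_le_mul_rpow_of_le_mul hr₁ hr₃ (by positivity) (by nlinarith) hpeetre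
    _ ≤ 2 * (1 + C ^ 2) * ((1 + ε ^ 2 * ‖x‖ ^ 2) ^ ((r - 1) / 2) / (1 + u ^ 2)) := by
        gcongr
        exact rpow_le_rpow_div_of_le hr₁ (by positivity) hux
    _ ≤ 2 * (1 + C ^ 2) * ((1 + ε ^ 2 * ‖x‖ ^ 2) ^ ((r - 1) / 2) * (2 / (1 + u) ^ 2)) := by
        rw [div_eq_mul_inv]
        gcongr
        exact inv_one_add_sq_le hu
    _ = _ := by ring

lemma rpow_div_one_add_le {r M : ℝ} (hM : 0 ≤ M) :
    (1 + M ^ 2) ^ ((r - 1) / 2) / (1 + M) ≤ (1 + M ^ 2) ^ ((r - 2) / 2) := by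
  have hA : 0 < 1 + M ^ 2 := by positivity
  rw [div_le_iff₀ (by positivity), show (r - 1) / 2 = (r - 2) / 2 + 1 / 2 by ring,
    rpow_add hA, ← sqrt_eq_rpow]
  gcongr
  rw [sqrt_le_left (by positivity)]
  nlinarith

lemma norm_sub_sub_deriv_le_of_norm_deriv2_le_s6 {F : Type*} [NormedAddCommGroup F]
    [NormedSpace ℝ F] {g g' g'' : ℝ → F} {K M : ℝ} (hM : 0 ≤ M)
    (hg : ∀ t, HasDerivAt g (g' t) t) (hg' : ∀ t, HasDerivAt g' (g'' t) t)
    (hbound : ∀ t ∈ Icc (0 : ℝ) 1, ‖g'' t‖ ≤ K / (1 + M * t) ^ 2) :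
    ‖g 1 - g 0 - g' 0‖ ≤ K / (1 + M) := by
  have hK : 0 ≤ K := by
    simpa using (norm_nonneg _).trans (hbound 0 (left_mem_Icc.2 zero_le_one))
  have hB : ∀ t, 0 ≤ t →
      HasDerivAt (fun t => K * t / (1 + M * t)) (K / (1 + M * t) ^ 2) t := by
    intro t ht
    have hne : 1 + M * t ≠ 0 := by positivity
    refine (((hasDerivAt_id' t).const_mul K).div
      (((hasDerivAt_id' t).const_mul M).const_add 1) hne).congr_deriv ?_
    field_simp
    ring
  have hderiv : ∀ t ∈ Icc (0 : ℝ) 1, ‖g' t - g' 0‖ ≤ K / (1 + M) := by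
    intro t ht
    have hfence := image_norm_le_of_norm_deriv_right_le_deriv_boundary'
      (f := fun t => g' t - g' 0) (B := fun t => K * t / (1 + M * t))
      (fun t _ => ((hg' t).sub_const _).continuousAt.continuousWithinAt)
      (fun t _ => ((hg' t).sub_const _).hasDerivWithinAt) (by simp)
      (fun t ht => (hB t ht.1).continuousAt.continuousWithinAt)
      (fun t ht => (hB t ht.1).hasDerivWithinAt) (fun t ht => hbound t (Ico_subset_Icc_self ht))
      ht
    refine hfence.trans ?_
    rw [div_le_div_iff₀ (by nlinarith [ht.1]) (by linarith)]
    nlinarith [ht.1, ht.2, mul_nonneg hK hM]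
  have := norm_image_sub_le_of_norm_deriv_le_segment_01'
    (f := fun t => g t - t • g' 0) (f' := fun t => g' t - g' 0)
    (fun t _ => ((hg t).sub ((hasDerivAt_id t).smul_const (g' 0))).hasDerivWithinAt.congr_deriv
      (by simp))
    (fun t ht => hderiv t (Ico_subset_Icc_self ht))
  simpa [sub_right_comm] using this

lemma hasDerivAt_comp_add_smul {E F : Type*} [NormedAddCommGroup E] [NormedSpace ℝ E]
    [NormedAddCommGroup F] [NormedSpace ℝ F] {f : E → F} {a x : E} {t : ℝ}
    (hf : DifferentiableAt ℝ f (a + t • x)) :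
    HasDerivAt (fun s : ℝ => f (a + s • x)) (fderiv ℝ f (a + t • x) x) t := by
  have := hf.hasFDerivAt.comp_hasDerivAt t (((hasDerivAt_id t).smul_const x).const_add a)
  simpa [Function.comp_def] using this

lemma iteratedFDeriv_three_apply {E F : Type*} [NormedAddCommGroup E] [NormedSpace ℝ E]
    [NormedAddCommGroup F] [NormedSpace ℝ F] (f : E → F) (y u v w : E) :
    iteratedFDeriv ℝ 3 f y ![u, v, w] = fderiv ℝ (fderiv ℝ (fderiv ℝ f)) y u v w := by
  rw [iteratedFDeriv_succ_apply_right, iteratedFDeriv_two_apply]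
  simp [Fin.init, Fin.last]

lemma abs_apply_le_of_abs_apply_single_le {ι : Type*} [Fintype ι] [DecidableEq ι] {n : ℕ}
    (f : ContinuousMultilinearMap ℝ (fun _ : Fin n => EuclideanSpace ℝ ι) ℝ) {c : ℝ}
    (h : ∀ k : Fin n → ι, |f fun i => EuclideanSpace.single (k i) 1| ≤ c)
    (v : Fin n → EuclideanSpace ℝ ι) :
    |f v| ≤ Fintype.card ι ^ n * c * ∏ i, ‖v i‖ := by
  have hv : v = fun i => ∑ k, v i k • EuclideanSpace.single k (1 : ℝ) := by
    funext i
    simpa using ((EuclideanSpace.basisFun ι ℝ).sum_repr (v i)).symm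
  calc |f v| = |∑ k : Fin n → ι, (∏ i, v i (k i)) * f fun i => EuclideanSpace.single (k i) 1|
      := by
        conv_lhs => rw [hv]
        rw [f.map_sum]
        simp only [f.map_smul_univ, smul_eq_mul]
    _ ≤ ∑ k : Fin n → ι, (∏ i, ‖v i‖) * c := by
        refine (Finset.abs_sum_le_sum_abs _ _).trans (Finset.sum_le_sum fun k _ => ?_)
        rw [abs_mul, Finset.abs_prod]
        exact mul_le_mul (Finset.prod_le_prod (fun i _ => abs_nonneg _)
          fun i _ => PiLp.norm_apply_le (v i) (k i)) (h k) (abs_nonneg _)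
          (Finset.prod_nonneg fun i _ => norm_nonneg _)
    _ = Fintype.card ι ^ n * c * ∏ i, ‖v i‖ := by
        simp only [Finset.sum_const, Finset.card_univ, Fintype.card_pi, Finset.prod_const,
          Fintype.card_fin, nsmul_eq_mul, Nat.cast_pow]
        ring

lemma abs_iteratedFDeriv_three_apply_le {ι : Type*} [Fintype ι] [DecidableEq ι]
    {C_V C_a r ε t : ℝ} {V : EuclideanSpace ℝ ι → ℝ} (hCV : 0 ≤ C_V) (hr₁ : 1 ≤ r)
    (hr₃ : r ≤ 3) (hε : 0 ≤ ε)
    (hV3 : ∀ y : EuclideanSpace ℝ ι, ∀ j k l : ι,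
      |iteratedFDeriv ℝ 3 V y
          ![EuclideanSpace.single j 1, EuclideanSpace.single k 1, EuclideanSpace.single l 1]| ≤
        C_V * ε ^ 3 * (1 + ε ^ 2 * ‖y‖ ^ 2) ^ ((r - 3) / 2))
    {a : EuclideanSpace ℝ ι} (ha : ε * ‖a‖ ≤ C_a) (ht : t ∈ Icc (0 : ℝ) 1)
    (x w : EuclideanSpace ℝ ι) :
    |iteratedFDeriv ℝ 3 V (a + t • x) ![x, x, w]| ≤
      4 * Fintype.card ι ^ 3 * C_V * (1 + C_a ^ 2) * ε ^ 3 * ‖x‖ ^ 2 * ‖w‖ *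
        (1 + ε ^ 2 * ‖x‖ ^ 2) ^ ((r - 1) / 2) / (1 + ε * ‖x‖ * t) ^ 2 := by
  have hcoord := abs_apply_le_of_abs_apply_single_le (iteratedFDeriv ℝ 3 V (a + t • x))
    (fun k => by
      convert hV3 (a + t • x) (k 0) (k 1) (k 2) using 3
      funext i
      fin_cases i <;> rfl)
    ![x, x, w]
  have hnorms : ∏ i, ‖![x, x, w] i‖ = ‖x‖ * ‖x‖ * ‖w‖ := by
    simp [Fin.prod_univ_succ, mul_assoc]
  have hweight := one_add_sq_mul_norm_add_smul_rpow_le (x := x) hr₁ hr₃ hε ha ht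
  calc _ ≤ _ := hcoord
    _ = Fintype.card ι ^ 3 * (C_V * ε ^ 3 * (1 + ε ^ 2 * ‖a + t • x‖ ^ 2) ^ ((r - 3) / 2)) *
          (‖x‖ * ‖x‖ * ‖w‖) := by rw [hnorms]
    _ ≤ Fintype.card ι ^ 3 * (C_V * ε ^ 3 * (4 * (1 + C_a ^ 2) *
          (1 + ε ^ 2 * ‖x‖ ^ 2) ^ ((r - 1) / 2) / (1 + ε * ‖x‖ * t) ^ 2)) *
          (‖x‖ * ‖x‖ * ‖w‖) := by
        gcongr
    _ = _ := by ring

theorem abs_fderiv_sub_sub_iteratedFDeriv_le {ι : Type*} [Fintype ι] [DecidableEq ι]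
    {C_V C_a r ε : ℝ} {V : EuclideanSpace ℝ ι → ℝ} (hCV : 0 ≤ C_V) (hr₁ : 1 ≤ r)
    (hr₃ : r ≤ 3) (hε : 0 ≤ ε) (hV : ContDiff ℝ 3 V)
    (hV3 : ∀ y : EuclideanSpace ℝ ι, ∀ j k l : ι,
      |iteratedFDeriv ℝ 3 V y
          ![EuclideanSpace.single j 1, EuclideanSpace.single k 1, EuclideanSpace.single l 1]| ≤
        C_V * ε ^ 3 * (1 + ε ^ 2 * ‖y‖ ^ 2) ^ ((r - 3) / 2))
    {a : EuclideanSpace ℝ ι} (ha : ε * ‖a‖ ≤ C_a) (x : EuclideanSpace ℝ ι) (j : ι) :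
    |fderiv ℝ V (x + a) (EuclideanSpace.single j 1) - fderiv ℝ V a (EuclideanSpace.single j 1) -
        iteratedFDeriv ℝ 2 V a ![x, EuclideanSpace.single j 1]| ≤
      4 * Fintype.card ι ^ 3 * C_V * (1 + C_a ^ 2) * ε ^ 3 * ‖x‖ ^ 2 *
        (1 + ε ^ 2 * ‖x‖ ^ 2) ^ ((r - 2) / 2) := by
  set e : EuclideanSpace ℝ ι := EuclideanSpace.single j 1
  set K := 4 * Fintype.card ι ^ 3 * C_V * (1 + C_a ^ 2) * ε ^ 3 * ‖x‖ ^ 2 *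
    (1 + ε ^ 2 * ‖x‖ ^ 2) ^ ((r - 1) / 2)
  have hV₁ : ContDiff ℝ 2 (fderiv ℝ V) := hV.fderiv_right (by norm_num)
  have hV₂ : ContDiff ℝ 1 (fderiv ℝ (fderiv ℝ V)) := hV₁.fderiv_right (by norm_num)
  have hg : ∀ t : ℝ, HasDerivAt (fun t : ℝ => fderiv ℝ V (a + t • x) e)
      (fderiv ℝ (fderiv ℝ V) (a + t • x) x e) t := fun t => by
    simpa using (hasDerivAt_comp_add_smul (hV₁.differentiable (by norm_num) _)).clm_apply
      (hasDerivAt_const t e)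
  have hg' : ∀ t : ℝ, HasDerivAt (fun t : ℝ => fderiv ℝ (fderiv ℝ V) (a + t • x) x e)
      (iteratedFDeriv ℝ 3 V (a + t • x) ![x, x, e]) t := fun t => by
    simpa [iteratedFDeriv_three_apply] using
      ((hasDerivAt_comp_add_smul (hV₂.differentiable (by norm_num) _)).clm_apply
        (hasDerivAt_const t x)).clm_apply (hasDerivAt_const t e)
  have hbound : ∀ t ∈ Icc (0 : ℝ) 1,
      ‖iteratedFDeriv ℝ 3 V (a + t • x) ![x, x, e]‖ ≤ K / (1 + ε * ‖x‖ * t) ^ 2 := fun t ht => by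
    simpa [e] using abs_iteratedFDeriv_three_apply_le hCV hr₁ hr₃ hε hV3 ha ht x e
  calc _ ≤ K / (1 + ε * ‖x‖) := by
        simpa [add_comm x a, e, iteratedFDeriv_two_apply] using
          norm_sub_sub_deriv_le_of_norm_deriv2_le_s6 (by positivity) hg hg' hbound
    _ ≤ _ := by
        have hdecay := rpow_div_one_add_le (r := r) (M := ε * ‖x‖) (by positivity)
        rw [mul_pow] at hdecay
        simp only [K, mul_div_assoc]
        gcongr

theorem stmt_6_general (d : ℕ) (hd : 1 ≤ d) (C_V C_a : ℝ) (hCV : 0 < C_V) :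
    ∃ C₂ : ℝ, 0 < C₂ ∧
      ∀ r : ℝ, 1 ≤ r → r < 2 → ∀ ε : ℝ, 0 < ε →
      ∀ V : EuclideanSpace ℝ (Fin d) → ℝ, ContDiff ℝ 3 V →
      (∀ x : EuclideanSpace ℝ (Fin d), ∀ j k l : Fin d,
        |iteratedFDeriv ℝ 3 V x
            ![EuclideanSpace.single j 1, EuclideanSpace.single k 1, EuclideanSpace.single l 1]| ≤
          C_V * ε ^ 3 * (1 + ε ^ 2 * ‖x‖ ^ 2) ^ ((r - 3) / 2)) →
      ∀ a : EuclideanSpace ℝ (Fin d), ε * ‖a‖ ≤ C_a →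
      ∀ x : EuclideanSpace ℝ (Fin d), ∀ j : Fin d,
        |fderiv ℝ V (x + a) (EuclideanSpace.single j 1) -
            fderiv ℝ V a (EuclideanSpace.single j 1) -
            iteratedFDeriv ℝ 2 V a ![x, EuclideanSpace.single j 1]| ≤
          C₂ * ε ^ 3 * ‖x‖ ^ 2 * (1 + ε ^ 2 * ‖x‖ ^ 2) ^ ((r - 2) / 2) := by
  have hd₀ : (0 : ℝ) < d := by exact_mod_cast hd
  refine ⟨4 * d ^ 3 * C_V * (1 + C_a ^ 2), by positivity, ?_⟩
  intro r hr₁ hr₂ ε hε V hV hV3 a ha x j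
  simpa using abs_fderiv_sub_sub_iteratedFDeriv_le hCV.le hr₁ (by linarith) hε.le hV hV3 ha x j

/-- Case (ii) of Lemma B.1 (lem:RVup): there is a constant `C₂ > 0`, depending only on
`C_V`, `d` and `C_a`, such that for every `1 ≤ r < 2`, every `ε > 0`, every `C³`
potential `V` on `ℝ^d` with `|∂_j∂_k∂_l V(x)| ≤ C_V ε³ (1+ε²|x|²)^((r−3)/2)`, every
`a` with `ε|a| ≤ C_a`, every `x` and every `j`,
`|∂_j V(x+a) − ∂_j V(a) − Σ_k ∂_k∂_j V(a) x_k| ≤ C₂ ε³ |x|² (1+ε²|x|²)^((r−2)/2)`. -/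
theorem stmt_6 (d : ℕ) (hd : 1 ≤ d) (C_V C_a : ℝ) (hCV : 0 < C_V) (hCa : 0 < C_a) :
    ∃ C₂ : ℝ, 0 < C₂ ∧
      ∀ r : ℝ, 1 ≤ r → r < 2 → ∀ ε : ℝ, 0 < ε →
      ∀ V : EuclideanSpace ℝ (Fin d) → ℝ, ContDiff ℝ 3 V →
      (∀ x : EuclideanSpace ℝ (Fin d), ∀ j k l : Fin d,
        |iteratedFDeriv ℝ 3 V x
            ![EuclideanSpace.single j 1, EuclideanSpace.single k 1, EuclideanSpace.single l 1]| ≤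
          C_V * ε ^ 3 * (1 + ε ^ 2 * ‖x‖ ^ 2) ^ ((r - 3) / 2)) →
      ∀ a : EuclideanSpace ℝ (Fin d), ε * ‖a‖ ≤ C_a →
      ∀ x : EuclideanSpace ℝ (Fin d), ∀ j : Fin d,
        |fderiv ℝ V (x + a) (EuclideanSpace.single j 1) -
            fderiv ℝ V a (EuclideanSpace.single j 1) -
            iteratedFDeriv ℝ 2 V a ![x, EuclideanSpace.single j 1]| ≤
          C₂ * ε ^ 3 * ‖x‖ ^ 2 * (1 + ε ^ 2 * ‖x‖ ^ 2) ^ ((r - 2) / 2) :=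
  stmt_6_general d hd C_V C_a hCV
end

section
/- Let d ≥ 1, r ≥ 1, and let C_V, c_V, c_L, C_E be positive real numbers. There exist positive constants C_a and C_p, depending only on c_L, c_V, C_V, d, r and C_E, with the following property. Let 0 < ε ≤ C_E, let V : ℝ^d → [0,∞) be continuously differentiable with |∂_j V(x)| ≤ C_V ε (1+ε²|x|²)^((r−1)/2) for all x ∈ ℝ^d and all j, and with V(x) ≥ c_V (ε|x|)^r whenever ε|x| ≥ c_L. Let a, p : [0,T] → ℝ^d be continuously differentiable, set α^tr(t) := a'(t) − 2p(t), α^b(t) := −p'(t) − ∇V(a(t)), |α(t)| := (|α^tr(t)|² + |α^b(t)|²)^(1/2), ᾱ(t) := sup_{0≤s≤t} |α(s)|, and h₀ := (|p(0)|² + V(a(0)))/2, and assume h₀ ≤ C_E. Set C_{T₁} := c_V / (2^(max(2,r−1)/2) C_V d). Then for every t ∈ [0,T] with t ≤ C_{T₁} / ((ε² + ᾱ(t))(1 + ε + h₀)), one has ε|a(t)| ≤ C_a and |p(t)| ≤ C_p (√h₀ + ᾱ(t)·t + ε). -/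
/-!
The classical energy `h = (|p|² + V(a))/2` is almost conserved: along the trajectory
`h' = ⟪∇V(a), α^tr⟫/2 - ⟪p, α^b⟫`, so `|h'| ≤ ᾱ (|p| + |∇V(a)|/2)`. The derivative bound and
the coercivity of `V` give `|∇V(x)| ≲ ε (1 + (ε|x|)^r) ≲ ε (1 + V(x))`, hence
`|h'| ≲ ᾱ (1 + h)`, and Grönwall bounds `h` by a constant as long as `ᾱ t ≤ C_{T₁}`.
Coercivity then bounds `ε|a|`, which in turn gives `|∇V(a)| ≲ ε`. Integrating `h'` once more,
`|p|² ≤ 2h ≤ 2h₀ + 2ᾱt (P + Cε)` with `P` the maximum of `|p|` on `[0, t]`, and solving this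
quadratic inequality for `P` gives the momentum bound.
-/

open Set

/-- The running supremum `ᾱ(t) = sup_{0≤s≤t} |α(s)|` of the deviation
`α = (α^tr, α^b) = (a' − 2p, −p' − ∇V(a))` from the Newtonian equations of motion. -/
noncomputable def alphaBar {d : ℕ} (V : EuclideanSpace ℝ (Fin d) → ℝ)
    (a p a' p' : ℝ → EuclideanSpace ℝ (Fin d)) (t : ℝ) : ℝ :=
  sSup ((fun s => Real.sqrt (‖a' s - (2 : ℝ) • p s‖ ^ 2 +
    ‖-p' s - gradient V (a s)‖ ^ 2)) '' Icc 0 t)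

open Real
open scoped RealInnerProductSpace

lemma one_add_sq_rpow_le {z r : ℝ} (hz : 0 ≤ z) (hr : 1 ≤ r) :
    (1 + z ^ 2) ^ ((r - 1) / 2) ≤ 2 ^ (r - 1) * (1 + z ^ r) := by
  have hsq : (1 + z ^ 2) ^ ((r - 1) / 2) ≤ (1 + z) ^ (r - 1) :=
    calc (1 + z ^ 2) ^ ((r - 1) / 2) ≤ ((1 + z) ^ 2) ^ ((r - 1) / 2) :=
          rpow_le_rpow (by positivity) (by nlinarith) (by linarith)
      _ = (1 + z) ^ (r - 1) := by
          rw [← rpow_natCast, ← rpow_mul (by positivity)]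
          ring_nf
  have hconv : (1 + z) ^ r ≤ 2 ^ (r - 1) * (1 + z ^ r) := by
    lift z to NNReal using hz
    have := NNReal.rpow_add_le_mul_rpow_add_rpow 1 z hr
    rw [NNReal.one_rpow] at this
    exact_mod_cast this
  calc (1 + z ^ 2) ^ ((r - 1) / 2) ≤ (1 + z) ^ (r - 1) := hsq
    _ ≤ (1 + z) ^ r := rpow_le_rpow_of_exponent_le (by linarith) (by linarith)
    _ ≤ 2 ^ (r - 1) * (1 + z ^ r) := hconv

lemma rpow_le_add_div_of_coercive {z r c c_L v : ℝ} (hz : 0 ≤ z) (hr : 0 ≤ r) (hc : 0 < c)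
    (hcL : 0 ≤ c_L) (hv : 0 ≤ v) (hfar : c_L ≤ z → c * z ^ r ≤ v) :
    z ^ r ≤ c_L ^ r + v / c := by
  rcases le_or_gt c_L z with hzL | hzL
  · have := (le_div_iff₀' hc).2 (hfar hzL)
    linarith [rpow_nonneg hcL r]
  · have := rpow_le_rpow hz hzL.le hr
    linarith [div_nonneg hv hc.le]

lemma le_of_sq_le_two_mul_add {P h X c ε : ℝ} (hh : 0 ≤ h) (hX : 0 ≤ X) (hc : 0 ≤ c)
    (hε : 0 ≤ ε) (hsq : P ^ 2 ≤ 2 * h + 2 * X * P + c * X * ε) :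
    P ≤ (2 + √c) * (√h + X + ε) := by
  have := sq_sqrt hh
  have := sq_sqrt hc
  by_contra! hlt
  nlinarith [sqrt_nonneg h, sqrt_nonneg c, mul_nonneg hX hε, mul_nonneg (sqrt_nonneg c) hX,
    mul_nonneg (sqrt_nonneg c) hε, mul_nonneg (sqrt_nonneg c) (sqrt_nonneg h)]

lemma mul_le_of_le_div_sq_add_mul {α t ε h C : ℝ} (hα : 0 ≤ α) (ht : 0 ≤ t) (hε : 0 < ε)
    (hh : 0 ≤ h) (htC : t ≤ C / ((ε ^ 2 + α) * (1 + ε + h))) : α * t ≤ C := by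
  have hD : ε ^ 2 + α ≤ (ε ^ 2 + α) * (1 + ε + h) :=
    le_mul_of_one_le_right (by positivity) (by linarith)
  calc α * t ≤ (ε ^ 2 + α) * (1 + ε + h) * t :=
        mul_le_mul_of_nonneg_right ((le_add_of_nonneg_left (sq_nonneg ε)).trans hD) ht
    _ ≤ C := by rwa [mul_comm, ← le_div_iff₀ ((by positivity : 0 < ε ^ 2 + α).trans_le hD)]

lemma EuclideanSpace.norm_le_sqrt_card_mul {ι : Type*} [Fintype ι] (y : EuclideanSpace ℝ ι)
    {B : ℝ} (h : ∀ j, |y j| ≤ B) : ‖y‖ ≤ √(Fintype.card ι) * B := by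
  rcases isEmpty_or_nonempty ι with hι | ⟨⟨j⟩⟩
  · simp [Subsingleton.elim y 0]
  have hB : 0 ≤ B := (abs_nonneg _).trans (h j)
  rw [EuclideanSpace.norm_eq, ← sqrt_sq hB, ← sqrt_mul (Nat.cast_nonneg _)]
  refine sqrt_le_sqrt ?_
  calc ∑ i, ‖y i‖ ^ 2 ≤ ∑ _i : ι, B ^ 2 :=
        Finset.sum_le_sum fun i _ => by
          rw [norm_eq_abs]; exact pow_le_pow_left₀ (abs_nonneg _) (h i) 2
    _ = Fintype.card ι * B ^ 2 := by simp

lemma norm_gradient_le_sqrt_card_mul {ι : Type*} [Fintype ι] [DecidableEq ι]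
    {V : EuclideanSpace ℝ ι → ℝ} {x : EuclideanSpace ℝ ι} {B : ℝ}
    (h : ∀ j, |fderiv ℝ V x (EuclideanSpace.single j 1)| ≤ B) :
    ‖gradient V x‖ ≤ √(Fintype.card ι) * B := by
  refine EuclideanSpace.norm_le_sqrt_card_mul _ fun j => ?_
  simpa [← inner_gradient_left, EuclideanSpace.inner_single_right] using h j

lemma norm_gradient_le_of_abs_fderiv_le_of_coercive {d : ℕ} {V : EuclideanSpace ℝ (Fin d) → ℝ}
    {x : EuclideanSpace ℝ (Fin d)} {ε r C_V c_V c_L : ℝ} (hr : 1 ≤ r) (hCV : 0 ≤ C_V)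
    (hcV : 0 < c_V) (hcL : 0 ≤ c_L) (hε : 0 ≤ ε) (hVx : 0 ≤ V x)
    (hder : ∀ j, |fderiv ℝ V x (EuclideanSpace.single j 1)| ≤
      C_V * ε * (1 + ε ^ 2 * ‖x‖ ^ 2) ^ ((r - 1) / 2))
    (hfar : c_L ≤ ε * ‖x‖ → c_V * (ε * ‖x‖) ^ r ≤ V x) :
    ‖gradient V x‖ ≤ √d * C_V * 2 ^ (r - 1) * ε * (1 + c_L ^ r + V x / c_V) := by
  have hcoer := rpow_le_add_div_of_coercive (by positivity) (by linarith) hcV hcL hVx hfar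
  calc ‖gradient V x‖ ≤ √d * (C_V * ε * (1 + (ε * ‖x‖) ^ 2) ^ ((r - 1) / 2)) := by
        simpa only [Fintype.card_fin, mul_pow] using norm_gradient_le_sqrt_card_mul hder
    _ ≤ √d * (C_V * ε * (2 ^ (r - 1) * (1 + (c_L ^ r + V x / c_V)))) := by
        gcongr
        exact (one_add_sq_rpow_le (by positivity) hr).trans (by gcongr)
    _ = √d * C_V * 2 ^ (r - 1) * ε * (1 + c_L ^ r + V x / c_V) := by ring

lemma le_mul_exp_of_abs_deriv_le_mul_self {f f' : ℝ → ℝ} {K a b : ℝ}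
    (hf : ∀ s ∈ Icc a b, HasDerivAt f (f' s) s) (hf0 : ∀ s ∈ Icc a b, 0 ≤ f s)
    (bound : ∀ s ∈ Icc a b, |f' s| ≤ K * f s) :
    ∀ s ∈ Icc a b, f s ≤ f a * exp (K * (s - a)) := by
  intro s hs
  have h := norm_le_gronwallBound_of_norm_deriv_right_le (f := f) (ε := 0)
    (HasDerivAt.continuousOn hf)
    (fun x hx => (hf x (Ico_subset_Icc_self hx)).hasDerivWithinAt)
    (abs_of_nonneg (hf0 a ⟨le_rfl, hs.1.trans hs.2⟩)).le
    (fun x hx => by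
      rw [norm_eq_abs, norm_eq_abs, abs_of_nonneg (hf0 x (Ico_subset_Icc_self hx)), add_zero]
      exact bound x (Ico_subset_Icc_self hx)) s hs
  rwa [gronwallBound_ε0, norm_eq_abs, abs_of_nonneg (hf0 s hs)] at h

section AlmostConserved

variable {F : Type*} [NormedAddCommGroup F] {p g : ℝ → F} {E E' : ℝ → ℝ} {α t : ℝ}

lemma le_one_add_mul_exp_of_abs_deriv_le {b L m τ e₀ : ℝ}
    (hE : ∀ s ∈ Icc 0 t, HasDerivAt E (E' s) s) (hpE : ∀ s ∈ Icc 0 t, ‖p s‖ ^ 2 ≤ 2 * E s)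
    (hE' : ∀ s ∈ Icc 0 t, |E' s| ≤ α * (‖p s‖ + ‖g s‖ / 2))
    (hg : ∀ s ∈ Icc 0 t, ‖g s‖ ≤ b * (L + m * E s)) (hb : 0 ≤ b) (hL : 0 ≤ L) (hm : 0 ≤ m)
    (hα : 0 ≤ α) (hατ : α * t ≤ τ) (hE₀ : E 0 ≤ e₀) :
    ∀ s ∈ Icc 0 t, E s ≤ (1 + e₀) * exp ((1 + b * (L + m) / 2) * τ) := by
  have hE0 : ∀ s ∈ Icc 0 t, 0 ≤ E s := fun s hs => by nlinarith [hpE s hs, sq_nonneg ‖p s‖]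
  have hp : ∀ s ∈ Icc 0 t, ‖p s‖ ≤ 1 + E s := fun s hs => by
    nlinarith [hpE s hs, sq_nonneg (‖p s‖ - 1)]
  have hg' : ∀ s ∈ Icc 0 t, ‖g s‖ ≤ b * (L + m) * (1 + E s) := fun s hs =>
    (hg s hs).trans <| by
      rw [mul_assoc]; gcongr; nlinarith [hE0 s hs, mul_nonneg hL (hE0 s hs)]
  intro s hs
  have hgron := le_mul_exp_of_abs_deriv_le_mul_self (f := fun s => 1 + E s)
    (K := (1 + b * (L + m) / 2) * α)
    (fun s hs => (hE s hs).const_add 1) (fun s hs => by linarith [hE0 s hs])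
    (fun s hs =>
      calc |E' s| ≤ α * (‖p s‖ + ‖g s‖ / 2) := hE' s hs
        _ ≤ α * ((1 + E s) + b * (L + m) * (1 + E s) / 2) := by
          gcongr <;> [exact hp s hs; exact hg' s hs]
        _ = (1 + b * (L + m) / 2) * α * (1 + E s) := by ring) s hs
  have hαs : α * s ≤ τ := (mul_le_mul_of_nonneg_left hs.2 hα).trans hατ
  calc E s ≤ (1 + E 0) * exp ((1 + b * (L + m) / 2) * α * (s - 0)) := by linarith
    _ ≤ (1 + e₀) * exp ((1 + b * (L + m) / 2) * τ) := by
      rw [sub_zero, mul_assoc]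
      gcongr
      linarith [hE0 0 ⟨le_rfl, hs.1.trans hs.2⟩]

lemma norm_le_mul_sqrt_add_of_abs_deriv_le {c ε : ℝ} (hp : ContinuousOn p (Icc 0 t))
    (hE : ∀ s ∈ Icc 0 t, HasDerivAt E (E' s) s) (hpE : ∀ s ∈ Icc 0 t, ‖p s‖ ^ 2 ≤ 2 * E s)
    (hE' : ∀ s ∈ Icc 0 t, |E' s| ≤ α * (‖p s‖ + ‖g s‖ / 2))
    (hg : ∀ s ∈ Icc 0 t, ‖g s‖ ≤ c * ε) (ht : 0 ≤ t) (hα : 0 ≤ α) (hc : 0 ≤ c) (hε : 0 ≤ ε) :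
    ‖p t‖ ≤ (2 + √c) * (√(E 0) + α * t + ε) := by
  obtain ⟨s₀, hs₀, hmax⟩ := isCompact_Icc.exists_isMaxOn (nonempty_Icc.2 ht) hp.norm
  set P := ‖p s₀‖
  have hmvt := norm_image_sub_le_of_norm_deriv_le_segment' (C := α * (P + c * ε / 2))
    (fun s hs => (hE s hs).hasDerivWithinAt) (fun s hs => by
      have hs' := Ico_subset_Icc_self hs
      calc ‖E' s‖ ≤ α * (‖p s‖ + ‖g s‖ / 2) := hE' s hs'
        _ ≤ α * (P + c * ε / 2) := by gcongr <;> [exact hmax hs'; exact hg s hs']) s₀ hs₀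
  have hsq : P ^ 2 ≤ 2 * E 0 + 2 * (α * t) * P + c * (α * t) * ε := by
    have := (le_abs_self _).trans (norm_eq_abs _ ▸ hmvt)
    have := mul_le_mul_of_nonneg_left hs₀.2 (by positivity : 0 ≤ α * (P + c * ε / 2))
    nlinarith [hpE s₀ hs₀]
  have hE0 : 0 ≤ E 0 := by nlinarith [hpE 0 ⟨le_rfl, ht⟩, sq_nonneg ‖p 0‖]
  exact (hmax ⟨ht, le_rfl⟩).trans
    (le_of_sq_le_two_mul_add hE0 (by positivity) hc hε hsq)

end AlmostConserved

section Hamiltonian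

variable {F : Type*} [NormedAddCommGroup F]

noncomputable def hamiltonian (V : F → ℝ) (x y : F) : ℝ := (‖y‖ ^ 2 + V x) / 2

lemma hamiltonian_nonneg {V : F → ℝ} {x : F} (y : F) (hV : 0 ≤ V x) :
    0 ≤ hamiltonian V x y := by
  unfold hamiltonian; positivity

lemma sq_norm_le_two_mul_hamiltonian {V : F → ℝ} {x : F} (y : F) (hV : 0 ≤ V x) :
    ‖y‖ ^ 2 ≤ 2 * hamiltonian V x y := by
  unfold hamiltonian; linarith

lemma le_two_mul_hamiltonian (V : F → ℝ) (x y : F) : V x ≤ 2 * hamiltonian V x y := by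
  unfold hamiltonian; nlinarith [sq_nonneg ‖y‖]

variable [InnerProductSpace ℝ F]

lemma hasDerivAt_hamiltonian [CompleteSpace F] {V : F → ℝ} {a p : ℝ → F} {a' p' : F} {s : ℝ}
    (hV : DifferentiableAt ℝ V (a s)) (ha : HasDerivAt a a' s) (hp : HasDerivAt p p' s) :
    HasDerivAt (fun s => hamiltonian V (a s) (p s))
      (⟪gradient V (a s), a'⟫ / 2 + ⟪p s, p'⟫) s := by
  have hp2 : HasDerivAt (fun s => ‖p s‖ ^ 2) (2 * ⟪p s, p'⟫) s := by
    simpa only [real_inner_self_eq_norm_sq, real_inner_comm p', ← two_mul] using hp.inner ℝ hp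
  have hVa : HasDerivAt (fun s => V (a s)) ⟪gradient V (a s), a'⟫ s := by
    rw [inner_gradient_left]; exact hV.hasFDerivAt.comp_hasDerivAt s ha
  exact ((hp2.add hVa).div_const 2).congr_deriv (by ring)

lemma abs_inner_div_two_add_inner_le {g x' y y' : F} {α : ℝ} (hx : ‖x' - (2 : ℝ) • y‖ ≤ α)
    (hy : ‖-y' - g‖ ≤ α) : |⟪g, x'⟫ / 2 + ⟪y, y'⟫| ≤ α * (‖y‖ + ‖g‖ / 2) := by
  have hsplit : ⟪g, x'⟫ / 2 + ⟪y, y'⟫ = ⟪g, x' - (2 : ℝ) • y⟫ / 2 - ⟪y, -y' - g⟫ := by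
    simp only [inner_sub_right, inner_neg_right, inner_smul_right, real_inner_comm g y]
    ring
  have h1 := (abs_real_inner_le_norm g (x' - (2 : ℝ) • y)).trans
    (mul_le_mul_of_nonneg_left hx (norm_nonneg g))
  have h2 := (abs_real_inner_le_norm y (-y' - g)).trans
    (mul_le_mul_of_nonneg_left hy (norm_nonneg y))
  rw [hsplit]
  calc _ ≤ |⟪g, x' - (2 : ℝ) • y⟫| / 2 + |⟪y, -y' - g⟫| := by
        simpa only [abs_div, abs_two] using
          abs_sub (⟪g, x' - (2 : ℝ) • y⟫ / 2) ⟪y, -y' - g⟫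
    _ ≤ _ := by linarith

end Hamiltonian

lemma alphaBar_nonneg {d : ℕ} (V : EuclideanSpace ℝ (Fin d) → ℝ)
    (a p a' p' : ℝ → EuclideanSpace ℝ (Fin d)) (t : ℝ) : 0 ≤ alphaBar V a p a' p' t :=
  Real.sSup_nonneg (by rintro _ ⟨s, -, rfl⟩; positivity)

lemma norm_le_alphaBar {d : ℕ} {V : EuclideanSpace ℝ (Fin d) → ℝ}
    {a p a' p' : ℝ → EuclideanSpace ℝ (Fin d)} {t s : ℝ} (hV : Continuous (gradient V))
    (ha : ContinuousOn a (Icc 0 t)) (hp : ContinuousOn p (Icc 0 t))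
    (ha' : ContinuousOn a' (Icc 0 t)) (hp' : ContinuousOn p' (Icc 0 t)) (hs : s ∈ Icc 0 t) :
    ‖a' s - (2 : ℝ) • p s‖ ≤ alphaBar V a p a' p' t ∧
      ‖-p' s - gradient V (a s)‖ ≤ alphaBar V a p a' p' t := by
  have hcont : ContinuousOn (fun s => √(‖a' s - (2 : ℝ) • p s‖ ^ 2 +
      ‖-p' s - gradient V (a s)‖ ^ 2)) (Icc 0 t) := by fun_prop
  have hle := le_csSup (isCompact_Icc.image_of_continuousOn hcont).bddAbove ⟨s, hs, rfl⟩
  constructor <;> refine le_trans ((le_sqrt (norm_nonneg _) (by positivity)).2 ?_) hle <;>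
    simp only [le_add_iff_nonneg_right, le_add_iff_nonneg_left] <;> positivity

lemma exists_hasDerivAt_hamiltonian_abs_le_alphaBar {d : ℕ} {V : EuclideanSpace ℝ (Fin d) → ℝ}
    {a p a' p' : ℝ → EuclideanSpace ℝ (Fin d)} {t : ℝ} (hV : ContDiff ℝ 1 V)
    (ha : ∀ s ∈ Icc 0 t, HasDerivAt a (a' s) s) (hp : ∀ s ∈ Icc 0 t, HasDerivAt p (p' s) s)
    (ha' : ContinuousOn a' (Icc 0 t)) (hp' : ContinuousOn p' (Icc 0 t)) :
    ∃ E' : ℝ → ℝ, ∀ s ∈ Icc 0 t,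
      HasDerivAt (fun s => hamiltonian V (a s) (p s)) (E' s) s ∧
        |E' s| ≤ alphaBar V a p a' p' t * (‖p s‖ + ‖gradient V (a s)‖ / 2) := by
  have hgrad : Continuous (gradient V) :=
    (InnerProductSpace.toDual ℝ _).symm.continuous.comp (hV.continuous_fderiv one_ne_zero)
  refine ⟨fun s => ⟪gradient V (a s), a' s⟫ / 2 + ⟪p s, p' s⟫, fun s hs =>
    ⟨hasDerivAt_hamiltonian ((hV.differentiable one_ne_zero) _) (ha s hs) (hp s hs), ?_⟩⟩
  obtain ⟨htr, hb⟩ := norm_le_alphaBar hgrad (HasDerivAt.continuousOn ha)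
    (HasDerivAt.continuousOn hp) ha' hp' hs
  exact abs_inner_div_two_add_inner_le htr hb

theorem stmt_9_general (d : ℕ) (r C_V c_V c_L C_E : ℝ) (hr : 1 ≤ r)
    (hCV : 0 < C_V) (hcV : 0 < c_V) (hcL : 0 < c_L) (hCE : 0 < C_E) :
    ∃ C_a : ℝ, 0 < C_a ∧ ∃ C_p : ℝ, 0 < C_p ∧
      ∀ ε : ℝ, 0 < ε → ε ≤ C_E →
      ∀ V : EuclideanSpace ℝ (Fin d) → ℝ, ContDiff ℝ 1 V →
      (∀ x, 0 ≤ V x) →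
      (∀ x : EuclideanSpace ℝ (Fin d), ∀ j : Fin d,
        |fderiv ℝ V x (EuclideanSpace.single j 1)| ≤
          C_V * ε * (1 + ε ^ 2 * ‖x‖ ^ 2) ^ ((r - 1) / 2)) →
      (∀ x : EuclideanSpace ℝ (Fin d), c_L ≤ ε * ‖x‖ → c_V * (ε * ‖x‖) ^ r ≤ V x) →
      ∀ T : ℝ, ∀ a p a' p' : ℝ → EuclideanSpace ℝ (Fin d),
      (∀ t ∈ Icc 0 T, HasDerivAt a (a' t) t) →
      (∀ t ∈ Icc 0 T, HasDerivAt p (p' t) t) →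
      ContinuousOn a' (Icc 0 T) → ContinuousOn p' (Icc 0 T) →
      (‖p 0‖ ^ 2 + V (a 0)) / 2 ≤ C_E →
      ∀ t ∈ Icc 0 T,
        t ≤ (c_V / ((2 : ℝ) ^ (max 2 (r - 1) / 2) * C_V * (d : ℝ))) /
            ((ε ^ 2 + alphaBar V a p a' p' t) * (1 + ε + (‖p 0‖ ^ 2 + V (a 0)) / 2)) →
        ε * ‖a t‖ ≤ C_a ∧
        ‖p t‖ ≤ C_p * (Real.sqrt ((‖p 0‖ ^ 2 + V (a 0)) / 2) +
          alphaBar V a p a' p' t * t + ε) := by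
  set CT1 := c_V / ((2 : ℝ) ^ (max 2 (r - 1) / 2) * C_V * (d : ℝ))
  set B := √d * C_V * 2 ^ (r - 1)
  set H := (1 + C_E) * exp ((1 + B * C_E * (1 + c_L ^ r + 2 / c_V) / 2) * CT1)
  set c := B * (1 + c_L ^ r + 2 * H / c_V)
  refine ⟨(c_L ^ r + 2 * H / c_V) ^ r⁻¹, by positivity, 2 + √c, by positivity, ?_⟩
  intro ε hε hεE V hV hVpos hVder hVfar T a p a' p' ha hp ha' hp' hE0 t ht htle
  set E := fun s => hamiltonian V (a s) (p s)
  have hsub : Icc 0 t ⊆ Icc 0 T := Icc_subset_Icc_right ht.2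
  have hpE (s) : ‖p s‖ ^ 2 ≤ 2 * E s := sq_norm_le_two_mul_hamiltonian _ (hVpos (a s))
  have hVE (s) : V (a s) ≤ 2 * E s := le_two_mul_hamiltonian _ _ _
  have hgrad (x) : ‖gradient V x‖ ≤ B * ε * (1 + c_L ^ r + V x / c_V) :=
    norm_gradient_le_of_abs_fderiv_le_of_coercive hr hCV.le hcV hcL.le hε.le (hVpos x)
      (hVder x) (hVfar x)
  have hα := alphaBar_nonneg V a p a' p' t
  obtain ⟨E', hE⟩ := exists_hasDerivAt_hamiltonian_abs_le_alphaBar hV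
    (fun s hs => ha s (hsub hs)) (fun s hs => hp s (hsub hs)) (ha'.mono hsub) (hp'.mono hsub)
  have hαt : alphaBar V a p a' p' t * t ≤ CT1 :=
    mul_le_of_le_div_sq_add_mul hα ht.1 hε (hamiltonian_nonneg _ (hVpos _)) htle
  have hEH : ∀ s ∈ Icc 0 t, E s ≤ H :=
    le_one_add_mul_exp_of_abs_deriv_le (b := B * C_E) (L := 1 + c_L ^ r) (m := 2 / c_V)
      (fun s hs => (hE s hs).1) (fun s _ => hpE s) (fun s hs => (hE s hs).2)
      (fun s _ => (hgrad (a s)).trans (by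
        have := hVpos (a s); rw [div_mul_eq_mul_div]; gcongr; exact hVE s))
      (by positivity) (by positivity) (by positivity) hα hαt hE0
  refine ⟨?_, ?_⟩
  · rw [le_rpow_inv_iff_of_pos (by positivity) (by positivity) (by linarith)]
    refine (rpow_le_add_div_of_coercive (by positivity) (by linarith) hcV hcL.le (hVpos _)
      (hVfar (a t))).trans ?_
    gcongr
    linarith [hVE t, hEH t ⟨ht.1, le_rfl⟩]
  · refine norm_le_mul_sqrt_add_of_abs_deriv_le
      (HasDerivAt.continuousOn fun s hs => hp s (hsub hs)) (fun s hs => (hE s hs).1)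
      (fun s _ => hpE s) (fun s hs => (hE s hs).2)
      (fun s hs => (hgrad (a s)).trans ?_) ht.1 hα (by positivity) hε.le
    have := hVpos (a s)
    show _ ≤ B * (1 + c_L ^ r + 2 * H / c_V) * ε
    rw [mul_right_comm]
    gcongr
    linarith [hVE s, hEH s hs]

/-- Proposition 5.1 (prop:apest2): bounds on the soliton position and momentum.
There exist constants `C_a, C_p > 0` depending only on `c_L, c_V, C_V, d, r, C_E`
such that for any `0 < ε ≤ C_E`, any nonnegative `C¹` potential `V` with
`|∂_j V(x)| ≤ C_V ε (1+ε²|x|²)^((r−1)/2)` and `V(x) ≥ c_V (ε|x|)^r` when `ε|x| ≥ c_L`,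
and any continuously differentiable trajectory `(a,p)` on `[0,T]` with initial
energy `h₀ = (|p(0)|² + V(a(0)))/2 ≤ C_E`: for all
`t ∈ [0,T]` with `t ≤ C_{T₁}/((ε² + ᾱ(t))(1 + ε + h₀))`, where
`C_{T₁} = c_V/(2^(max(2,r−1)/2) C_V d)`, one has `ε|a(t)| ≤ C_a` and
`|p(t)| ≤ C_p (√h₀ + ᾱ(t) t + ε)`. -/
theorem stmt_9 (d : ℕ) (hd : 1 ≤ d) (r C_V c_V c_L C_E : ℝ) (hr : 1 ≤ r)
    (hCV : 0 < C_V) (hcV : 0 < c_V) (hcL : 0 < c_L) (hCE : 0 < C_E) :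
    ∃ C_a : ℝ, 0 < C_a ∧ ∃ C_p : ℝ, 0 < C_p ∧
      ∀ ε : ℝ, 0 < ε → ε ≤ C_E →
      ∀ V : EuclideanSpace ℝ (Fin d) → ℝ, ContDiff ℝ 1 V →
      (∀ x, 0 ≤ V x) →
      (∀ x : EuclideanSpace ℝ (Fin d), ∀ j : Fin d,
        |fderiv ℝ V x (EuclideanSpace.single j 1)| ≤
          C_V * ε * (1 + ε ^ 2 * ‖x‖ ^ 2) ^ ((r - 1) / 2)) →
      (∀ x : EuclideanSpace ℝ (Fin d), c_L ≤ ε * ‖x‖ → c_V * (ε * ‖x‖) ^ r ≤ V x) →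
      ∀ T : ℝ, ∀ a p a' p' : ℝ → EuclideanSpace ℝ (Fin d),
      (∀ t ∈ Icc 0 T, HasDerivAt a (a' t) t) →
      (∀ t ∈ Icc 0 T, HasDerivAt p (p' t) t) →
      ContinuousOn a' (Icc 0 T) → ContinuousOn p' (Icc 0 T) →
      (‖p 0‖ ^ 2 + V (a 0)) / 2 ≤ C_E →
      ∀ t ∈ Icc 0 T,
        t ≤ (c_V / ((2 : ℝ) ^ (max 2 (r - 1) / 2) * C_V * (d : ℝ))) /
            ((ε ^ 2 + alphaBar V a p a' p' t) * (1 + ε + (‖p 0‖ ^ 2 + V (a 0)) / 2)) →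
        ε * ‖a t‖ ≤ C_a ∧
        ‖p t‖ ≤ C_p * (Real.sqrt ((‖p 0‖ ^ 2 + V (a 0)) / 2) +
          alphaBar V a p a' p' t * t + ε) :=
  stmt_9_general d r C_V c_V c_L C_E hr hCV hcV hcL hCE
end

section
/- Let d ≥ 1, let A be a symmetric real d×d matrix, v ∈ ℝ^d, c ∈ ℝ, and define V : ℝ^d → ℝ by V(x) := x·Ax + v·x + c. Let μ ∈ ℝ, let g : ℝ → ℝ be continuous, and let η̃ : ℝ^d → ℝ be twice continuously differentiable and satisfy, for all y ∈ ℝ^d, −Δη̃(y) + μ η̃(y) − g(η̃(y)²) η̃(y) + (y·Ay) η̃(y) = 0. Let a, p : ℝ → ℝ^d and γ : ℝ → ℝ be differentiable and satisfy, for all t, p'(t) = −(2A a(t) + v), a'(t) = 2p(t), and γ'(t) = |p(t)|² + μ − V(a(t)). Define ψ : ℝ^d × ℝ → ℂ by ψ(x,t) := exp( i ( p(t)·(x−a(t)) + γ(t) ) ) · η̃(x−a(t)). Then for all x ∈ ℝ^d and t ∈ ℝ, i ∂_t ψ(x,t) = −Δ_x ψ(x,t) + V(x) ψ(x,t) − g(|ψ(x,t)|²)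 ψ(x,t). -/
/-- The Laplacian of a complex-valued function on `ℝ^d`, as the sum of its second
partial derivatives. -/
noncomputable def lapC {d : ℕ} (f : (Fin d → ℝ) → ℂ) (x : Fin d → ℝ) : ℂ :=
  ∑ j, iteratedFDeriv ℝ 2 f x ![Pi.single j 1, Pi.single j 1]

/-- The Laplacian of a real-valued function on `ℝ^d`. -/
noncomputable def lapR {d : ℕ} (f : (Fin d → ℝ) → ℝ) (x : Fin d → ℝ) : ℝ :=
  ∑ j, iteratedFDeriv ℝ 2 f x ![Pi.single j 1, Pi.single j 1]

/-- The quadratic potential `V(x) = x·Ax + v·x + c`. -/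
def quadV {d : ℕ} (A : Matrix (Fin d) (Fin d) ℝ) (v : Fin d → ℝ) (c : ℝ)
    (x : Fin d → ℝ) : ℝ :=
  (∑ i, ∑ j, A i j * x i * x j) + (∑ i, v i * x i) + c

/-- The solitary wave ansatz `ψ(x,t) = e^{i(p(t)·(x−a(t)) + γ(t))} η̃(x−a(t))`. -/
noncomputable def solWave {d : ℕ} (η : (Fin d → ℝ) → ℝ) (a p : ℝ → Fin d → ℝ)
    (γ : ℝ → ℝ) (x : Fin d → ℝ) (t : ℝ) : ℂ :=
  Complex.exp (Complex.I * (((∑ i, p t i * (x i - a t i)) + γ t : ℝ) : ℂ)) *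
    (η (x - a t) : ℂ)

/-!
At a frozen time `t`, `ψ(·, t)` is the translate `η(· - a)` multiplied by the plane wave
`e^{i(p·y + const)}`, so the product rule gives `Δψ = e^{iφ} (-|p|² η + 2i p·∇η + Δη)(x - a)`.
In `i∂ₜψ`, the transport term coming from `ȧ = 2p` is `-2i p·∇η`, which cancels against the
cross term of `Δψ`. By `ṗ = -∇V(a)`, the formula for `γ̇`, and the exact second-order Taylor
expansion `V(x) = V(a) + ∇V(a)·(x - a) + (x - a)·A(x - a)` of the quadratic potential, the
phase speed is `μ + (x - a)·A(x - a) - V(x) - |p|²`. What remains is the profile equation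
at `y = x - a`.
-/

section SecondDirectionalDeriv

variable {E F 𝔸 : Type*} [NormedAddCommGroup E] [NormedSpace ℝ E]
  [NormedAddCommGroup F] [NormedSpace ℝ F] [NormedCommRing 𝔸] [NormedAlgebra ℝ 𝔸]

theorem ContDiff.iteratedFDeriv_two_apply_self {f : E → F} (hf : ContDiff ℝ 2 f) (x u : E) :
    iteratedFDeriv ℝ 2 f x ![u, u] = fderiv ℝ (fun y => fderiv ℝ f y u) x u := by
  have hdiff : DifferentiableAt ℝ (fderiv ℝ f) x :=
    (hf.fderiv_right (m := 1) le_rfl).differentiable one_ne_zero x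
  rw [iteratedFDeriv_two_apply, fderiv_clm_apply hdiff (differentiableAt_const u)]
  simp

theorem ContDiff.differentiable_fderiv_apply {f : E → F} (hf : ContDiff ℝ 2 f) (u : E) :
    Differentiable ℝ (fun y => fderiv ℝ f y u) :=
  ((hf.fderiv_right (m := 1) le_rfl).differentiable one_ne_zero).clm_apply
    (differentiable_const u)

theorem ContDiff.iteratedFDeriv_two_mul_apply_self {f h : E → 𝔸} (hf : ContDiff ℝ 2 f)
    (hh : ContDiff ℝ 2 h) (x u : E) :
    iteratedFDeriv ℝ 2 (fun y => f y * h y) x ![u, u] =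
      iteratedFDeriv ℝ 2 f x ![u, u] * h x + 2 * (fderiv ℝ f x u * fderiv ℝ h x u) +
        f x * iteratedFDeriv ℝ 2 h x ![u, u] := by
  have hf1 := hf.differentiable two_ne_zero
  have hh1 := hh.differentiable two_ne_zero
  have hfirst : (fun y => fderiv ℝ (fun y => f y * h y) y u) =
      fun y => f y * fderiv ℝ h y u + h y * fderiv ℝ f y u := by
    ext y
    simp [fderiv_fun_mul (hf1 y) (hh1 y)]
  have hsecond :=
    ((hf1 x).hasFDerivAt.fun_mul (hh.differentiable_fderiv_apply u x).hasFDerivAt).fun_add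
      ((hh1 x).hasFDerivAt.fun_mul (hf.differentiable_fderiv_apply u x).hasFDerivAt)
  rw [(hf.mul hh).iteratedFDeriv_two_apply_self, hfirst, hsecond.fderiv,
    hf.iteratedFDeriv_two_apply_self, hh.iteratedFDeriv_two_apply_self]
  simp only [add_apply, FunLike.coe_smul, Pi.smul_apply, smul_eq_mul]
  ring

end SecondDirectionalDeriv

section ComplexExpAffine

variable {E : Type*} [NormedAddCommGroup E] [NormedSpace ℝ E] (L : E →L[ℝ] ℂ) (c : ℂ)

theorem hasFDerivAt_cexp_affine (y : E) :
    HasFDerivAt (fun y => Complex.exp (L y + c)) (Complex.exp (L y + c) • L) y :=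
  (L.hasFDerivAt.add_const c).cexp

theorem contDiff_cexp_affine : ContDiff ℝ 2 fun y => Complex.exp (L y + c) :=
  (L.contDiff.add contDiff_const).cexp

theorem fderiv_cexp_affine_apply (y u : E) :
    fderiv ℝ (fun y => Complex.exp (L y + c)) y u = L u * Complex.exp (L y + c) := by
  simp [(hasFDerivAt_cexp_affine L c y).fderiv, mul_comm]

theorem iteratedFDeriv_two_cexp_affine_apply_self (x u : E) :
    iteratedFDeriv ℝ 2 (fun y => Complex.exp (L y + c)) x ![u, u] =
      L u ^ 2 * Complex.exp (L x + c) := by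
  have hfirst : (fun y => fderiv ℝ (fun y => Complex.exp (L y + c)) y u) =
      fun y => L u * Complex.exp (L y + c) := by
    ext y; exact fderiv_cexp_affine_apply L c y u
  rw [(contDiff_cexp_affine L c).iteratedFDeriv_two_apply_self, hfirst,
    ((hasFDerivAt_cexp_affine L c x).const_mul (L u)).fderiv]
  simp only [FunLike.coe_smul, Pi.smul_apply, smul_eq_mul]
  ring

end ComplexExpAffine

section RealValued

variable {E : Type*} [NormedAddCommGroup E] [NormedSpace ℝ E] {f : E → ℝ}

theorem fderiv_ofReal_comp_apply {x : E} (hf : DifferentiableAt ℝ f x) (u : E) :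
    fderiv ℝ (fun y => (f y : ℂ)) x u = fderiv ℝ f x u := by
  rw [show (fun y => (f y : ℂ)) = Complex.ofRealCLM ∘ f from rfl,
    (Complex.ofRealCLM.hasFDerivAt.comp x hf.hasFDerivAt).fderiv]
  rfl

theorem iteratedFDeriv_ofReal_comp_apply {n : ℕ} (hf : ContDiff ℝ n f) (x : E)
    (m : Fin n → E) :
    iteratedFDeriv ℝ n (fun y => (f y : ℂ)) x m = iteratedFDeriv ℝ n f x m := by
  rw [show (fun y => (f y : ℂ)) = Complex.ofRealCLM ∘ f from rfl,
    Complex.ofRealCLM.iteratedFDeriv_comp_left hf.contDiffAt le_rfl]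
  rfl

end RealValued

theorem lapC_ofReal_comp {d : ℕ} {f : (Fin d → ℝ) → ℝ} (hf : ContDiff ℝ 2 f) (x : Fin d → ℝ) :
    lapC (fun y => (f y : ℂ)) x = lapR f x := by
  simp [lapC, lapR, iteratedFDeriv_ofReal_comp_apply hf]

theorem lapR_comp_sub {d : ℕ} (f : (Fin d → ℝ) → ℝ) (b x : Fin d → ℝ) :
    lapR (fun y => f (y - b)) x = lapR f (x - b) := by
  simp [lapR, iteratedFDeriv_comp_sub]

theorem lapC_cexp_affine_mul {d : ℕ} (L : (Fin d → ℝ) →L[ℝ] ℂ) (c : ℂ)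
    {φ : (Fin d → ℝ) → ℂ} (hφ : ContDiff ℝ 2 φ) (x : Fin d → ℝ) :
    lapC (fun y => Complex.exp (L y + c) * φ y) x =
      Complex.exp (L x + c) * ((∑ j, L (Pi.single j 1) ^ 2) * φ x +
        2 * ∑ j, L (Pi.single j 1) * fderiv ℝ φ x (Pi.single j 1) + lapC φ x) := by
  simp only [lapC, (contDiff_cexp_affine L c).iteratedFDeriv_two_mul_apply_self hφ,
    iteratedFDeriv_two_cexp_affine_apply_self, fderiv_cexp_affine_apply, Finset.mul_sum,
    Finset.sum_mul, ← Finset.sum_add_distrib]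
  exact Finset.sum_congr rfl fun j _ => by ring

theorem ContinuousLinearMap.apply_eq_sum_smul_single {ι F : Type*} [Fintype ι] [DecidableEq ι]
    [NormedAddCommGroup F] [NormedSpace ℝ F] (f : (ι → ℝ) →L[ℝ] F) (u : ι → ℝ) :
    f u = ∑ j, u j • f (Pi.single j 1) := by
  conv_lhs => rw [← Finset.univ_sum_single u]
  refine (map_sum f _ _).trans (Finset.sum_congr rfl fun j _ => ?_)
  rw [← map_smul, ← Pi.single_smul', smul_eq_mul, mul_one]

open Matrix in
theorem Matrix.sum_sum_mul_mul_eq_dotProduct_mulVec {n R : Type*} [Fintype n] [CommSemiring R]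
    (A : Matrix n n R) (y : n → R) : ∑ i, ∑ j, A i j * y i * y j = y ⬝ᵥ A *ᵥ y := by
  simp only [dotProduct, mulVec, Finset.mul_sum]
  exact Finset.sum_congr rfl fun i _ => Finset.sum_congr rfl fun j _ => by ring

open Matrix in
theorem quadV_taylor {d : ℕ} {A : Matrix (Fin d) (Fin d) ℝ} (hA : A.IsSymm) (v : Fin d → ℝ)
    (c : ℝ) (x b : Fin d → ℝ) :
    quadV A v c x = quadV A v c b + ∑ i, ((2 : ℝ) • A.mulVec b + v) i * (x - b) i +
      ∑ i, ∑ j, A i j * (x - b) i * (x - b) j := by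
  obtain ⟨y, rfl⟩ : ∃ y, x = b + y := ⟨x - b, by abel⟩
  have hsymm : b ⬝ᵥ A *ᵥ y = y ⬝ᵥ A *ᵥ b := by
    rw [dotProduct_mulVec, ← mulVec_transpose, hA.eq, dotProduct_comm]
  simp only [quadV, Matrix.sum_sum_mul_mul_eq_dotProduct_mulVec, add_sub_cancel_left]
  change _ + v ⬝ᵥ (b + y) + c = _ + v ⬝ᵥ b + c + (2 • A *ᵥ b + v) ⬝ᵥ y + _
  simp only [mulVec_add, dotProduct_add, add_dotProduct, smul_dotProduct, hsymm,
    dotProduct_comm (A *ᵥ b) y, smul_eq_mul]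
  ring

section SolitaryWave

variable {d : ℕ}

noncomputable def boostCLM (P : Fin d → ℝ) : (Fin d → ℝ) →L[ℝ] ℂ :=
  ∑ j, (Complex.I * P j) • Complex.ofRealCLM.comp (ContinuousLinearMap.proj j)

theorem boostCLM_apply (P y : Fin d → ℝ) : boostCLM P y = Complex.I * ∑ j, P j * y j := by
  simp [boostCLM, Finset.mul_sum, mul_assoc]

theorem boostCLM_single (P : Fin d → ℝ) (j : Fin d) :
    boostCLM P (Pi.single j 1) = Complex.I * P j := by
  simp [boostCLM_apply, Pi.single_apply]

variable {η : (Fin d → ℝ) → ℝ} {a p : ℝ → Fin d → ℝ} {γ : ℝ → ℝ}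

theorem norm_solWave (x : Fin d → ℝ) (t : ℝ) : ‖solWave η a p γ x t‖ = |η (x - a t)| := by
  simp [solWave, Complex.norm_exp]

theorem phase_eq_boostCLM_add (P b y : Fin d → ℝ) (θ₀ : ℝ) :
    Complex.I * ((∑ i, P i * (y i - b i) + θ₀ : ℝ) : ℂ) =
      boostCLM P y + Complex.I * (θ₀ - ∑ i, P i * b i : ℝ) := by
  simp only [boostCLM_apply, mul_sub, Finset.sum_sub_distrib]
  push_cast
  ring

theorem solWave_eq_cexp_boost_mul (t : ℝ) :
    (fun y => solWave η a p γ y t) = fun y =>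
      Complex.exp (boostCLM (p t) y + Complex.I * (γ t - ∑ i, p t i * a t i : ℝ)) *
        (η (y - a t) : ℂ) := by
  ext y
  rw [solWave, phase_eq_boostCLM_add]

theorem lapC_solWave (hη : ContDiff ℝ 2 η) (x : Fin d → ℝ) (t : ℝ) :
    lapC (fun y => solWave η a p γ y t) x =
      Complex.exp (Complex.I * ((∑ i, p t i * (x i - a t i) + γ t : ℝ) : ℂ)) *
        (-((∑ j, p t j ^ 2 : ℝ) : ℂ) * η (x - a t) +
          2 * Complex.I * ((∑ j, p t j * fderiv ℝ η (x - a t) (Pi.single j 1) : ℝ) : ℂ) +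
          lapR η (x - a t)) := by
  have hφ : ContDiff ℝ 2 fun y => η (y - a t) := hη.comp (contDiff_id.sub contDiff_const)
  have hφ' : ContDiff ℝ 2 fun y => (η (y - a t) : ℂ) := Complex.ofRealCLM.contDiff.comp hφ
  have hgrad (j : Fin d) : fderiv ℝ (fun y => (η (y - a t) : ℂ)) x (Pi.single j 1) =
      fderiv ℝ η (x - a t) (Pi.single j 1) := by
    rw [fderiv_ofReal_comp_apply (hφ.differentiable two_ne_zero x), fderiv_comp_sub]
  rw [solWave_eq_cexp_boost_mul, lapC_cexp_affine_mul _ _ hφ', lapC_ofReal_comp hφ,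
    lapR_comp_sub, phase_eq_boostCLM_add]
  simp only [boostCLM_single, hgrad, mul_pow, Complex.I_sq]
  push_cast
  simp only [neg_one_mul, Finset.sum_neg_distrib, mul_assoc, ← Finset.mul_sum]

theorem hasDerivAt_solWave_time (hη : Differentiable ℝ η) {x a' : Fin d → ℝ} {t θ' : ℝ}
    (hθ : HasDerivAt (fun s => ∑ i, p s i * (x i - a s i) + γ s) θ' t)
    (ha : HasDerivAt a a' t) :
    HasDerivAt (fun s => solWave η a p γ x s)
      (Complex.exp (Complex.I * ((∑ i, p t i * (x i - a t i) + γ t : ℝ) : ℂ)) *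
        (Complex.I * θ' * η (x - a t) + fderiv ℝ η (x - a t) (-a'))) t := by
  have hexp := (hθ.ofReal_comp.const_mul Complex.I).cexp
  have hprof :=
    ((hη (x - a t)).hasFDerivAt.comp_hasDerivAt t ((hasDerivAt_const t x).fun_sub ha)).ofReal_comp
  refine (hexp.fun_mul hprof).congr_deriv ?_
  rw [zero_sub, Function.comp_apply]
  ring

theorem hasDerivAt_phase_of_newton {A : Matrix (Fin d) (Fin d) ℝ} (hA : A.IsSymm)
    (v : Fin d → ℝ) (c μ : ℝ) (x : Fin d → ℝ) (t : ℝ)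
    (hp : HasDerivAt p (-((2 : ℝ) • A.mulVec (a t) + v)) t)
    (ha : HasDerivAt a ((2 : ℝ) • p t) t)
    (hγ : HasDerivAt γ ((∑ i, p t i ^ 2) + μ - quadV A v c (a t)) t) :
    HasDerivAt (fun s => ∑ i, p s i * (x i - a s i) + γ s)
      (μ + ∑ i, ∑ j, A i j * (x - a t) i * (x - a t) j - quadV A v c x -
        ∑ i, p t i ^ 2) t := by
  have hsum := HasDerivAt.fun_sum (u := Finset.univ) fun i _ =>
    (hasDerivAt_pi.1 hp i).fun_mul ((hasDerivAt_const t (x i)).fun_sub (hasDerivAt_pi.1 ha i))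
  refine (hsum.fun_add hγ).congr_deriv ?_
  have hkin : ∑ i, p t i * (0 - 2 * p t i) = -(2 * ∑ i, p t i ^ 2) := by
    rw [Finset.mul_sum, ← Finset.sum_neg_distrib]
    exact Finset.sum_congr rfl fun i _ => by ring
  simp only [Pi.neg_apply, Pi.smul_apply, smul_eq_mul, neg_mul, Finset.sum_add_distrib,
    Finset.sum_neg_distrib, hkin, quadV_taylor hA v c x (a t), Pi.sub_apply]
  ring

end SolitaryWave

theorem stmt_17_general (d : ℕ) (A : Matrix (Fin d) (Fin d) ℝ) (hA : A.IsSymm)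
    (v : Fin d → ℝ) (c μ : ℝ) (g : ℝ → ℝ)
    (η : (Fin d → ℝ) → ℝ) (hη : ContDiff ℝ 2 η)
    (hprofile : ∀ y : Fin d → ℝ,
      -lapR η y + μ * η y - g (η y ^ 2) * η y + (∑ i, ∑ j, A i j * y i * y j) * η y = 0)
    (a p : ℝ → Fin d → ℝ) (γ : ℝ → ℝ)
    (hp : ∀ t, HasDerivAt p (-((2 : ℝ) • A.mulVec (a t) + v)) t)
    (ha : ∀ t, HasDerivAt a ((2 : ℝ) • p t) t)
    (hγ : ∀ t, HasDerivAt γ ((∑ i, p t i ^ 2) + μ - quadV A v c (a t)) t) :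
    ∀ (x : Fin d → ℝ) (t : ℝ),
      Complex.I * deriv (fun s => solWave η a p γ x s) t =
        -lapC (fun y => solWave η a p γ y t) x
          + (quadV A v c x : ℂ) * solWave η a p γ x t
          - (g (‖solWave η a p γ x t‖ ^ 2) : ℂ) * solWave η a p γ x t := by
  intro x t
  have hgrad : fderiv ℝ η (x - a t) (-((2 : ℝ) • p t)) =
      -(2 * ∑ j, p t j * fderiv ℝ η (x - a t) (Pi.single j 1)) := by
    simp only [map_neg, map_smul, ContinuousLinearMap.apply_eq_sum_smul_single (fderiv ℝ η _) (p t),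
      smul_eq_mul, Finset.mul_sum]
  have hprof := congrArg Complex.ofReal (hprofile (x - a t))
  rw [(hasDerivAt_solWave_time (hη.differentiable two_ne_zero)
    (hasDerivAt_phase_of_newton hA v c μ x t (hp t) (ha t) (hγ t)) (ha t)).deriv,
    lapC_solWave hη, norm_solWave, sq_abs, hgrad]
  simp only [solWave]
  set E := Complex.exp (Complex.I * ((∑ i, p t i * (x i - a t i) + γ t : ℝ) : ℂ))
  set Q := ∑ i, ∑ j, A i j * (x - a t) i * (x - a t) j
  set S := ∑ i, p t i ^ 2
  simp only [Complex.ofReal_add, Complex.ofReal_sub, Complex.ofReal_neg, Complex.ofReal_mul,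
    Complex.ofReal_ofNat, Complex.ofReal_zero] at hprof ⊢
  -- The residual is `-E` times the profile equation, up to the term `i · i θ' η` carrying the
  -- phase speed `θ' = μ + Q - V(x) - S`.
  linear_combination
    (-E) * hprof + E * (μ + Q - quadV A v c x - S : ℂ) * η (x - a t) * Complex.I_sq

/-- Appendix D (sec:fam): for a quadratic confining potential `V(x) = x·Ax + v·x + c`
with `A` symmetric, a `C²` profile `η̃` solving `−Δη̃ + μη̃ − g(η̃²)η̃ + (y·Ay)η̃ = 0`,
and modulation parameters solving the Newtonian equations
`ṗ = −(2Aa+v) = −∇V(a)`, `ȧ = 2p`, `γ̇ = |p|² + μ − V(a)`, the function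
`ψ(x,t) = e^{i(p(t)·(x−a(t)) + γ(t))} η̃(x−a(t))` solves the nonlinear Schrödinger
equation `i∂_tψ = −Δψ + Vψ − g(|ψ|²)ψ`. -/
theorem stmt_17 (d : ℕ) (hd : 1 ≤ d) (A : Matrix (Fin d) (Fin d) ℝ) (hA : A.IsSymm)
    (v : Fin d → ℝ) (c μ : ℝ) (g : ℝ → ℝ) (hg : Continuous g)
    (η : (Fin d → ℝ) → ℝ) (hη : ContDiff ℝ 2 η)
    (hprofile : ∀ y : Fin d → ℝ,
      -lapR η y + μ * η y - g (η y ^ 2) * η y + (∑ i, ∑ j, A i j * y i * y j) * η y = 0)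
    (a p : ℝ → Fin d → ℝ) (γ : ℝ → ℝ)
    (hp : ∀ t, HasDerivAt p (-((2 : ℝ) • A.mulVec (a t) + v)) t)
    (ha : ∀ t, HasDerivAt a ((2 : ℝ) • p t) t)
    (hγ : ∀ t, HasDerivAt γ ((∑ i, p t i ^ 2) + μ - quadV A v c (a t)) t) :
    ∀ (x : Fin d → ℝ) (t : ℝ),
      Complex.I * deriv (fun s => solWave η a p γ x s) t =
        -lapC (fun y => solWave η a p γ y t) x
          + (quadV A v c x : ℂ) * solWave η a p γ x t
          - (g (‖solWave η a p γ x t‖ ^ 2) : ℂ) * solWave η a p γ x t :=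
  stmt_17_general d A hA v c μ g η hη hprofile a p γ hp ha hγ
end
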